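/- arXiv:2505.04580 — 9 statements merged into one kernel-verified Lean document; each statement's English description precedes it below -/
import Mathlib

section
/- The metric consensus seminorm is submultiplicative: for any M₁ ∈ ℝ^{m×k} and any M₂ ∈ ℝ^{n×m} whose row sums are all equal, |M₂M₁|_p ≤ |M₂|_p · |M₁|_p for every p ∈ [1,∞]. -/
open Matrix Finset
open scoped ENNReal

noncomputable def matPNorm (p : ℝ≥0∞) [Fact (1 ≤ p)] {n m : ℕ}
    (M : Matrix (Fin n) (Fin m) ℝ) : ℝ :=
  ‖LinearMap.toContinuousLinearMap
    (Matrix.toLin (PiLp.basisFun p ℝ (Fin m)) (PiLp.basisFun p ℝ (Fin n)) M)‖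

noncomputable def metricSN (p : ℝ≥0∞) [Fact (1 ≤ p)] {n m : ℕ}
    (M : Matrix (Fin n) (Fin m) ℝ) : ℝ :=
  ⨅ c : Fin m → ℝ, matPNorm p (M - Matrix.of fun _ j => c j)

noncomputable def vecSN (p : ℝ≥0∞) [Fact (1 ≤ p)] {m : ℕ} (x : Fin m → ℝ) : ℝ :=
  ⨅ c : ℝ, ‖(WithLp.equiv p (Fin m → ℝ)).symm (x - fun _ => c)‖

noncomputable def inducedSN (p : ℝ≥0∞) [Fact (1 ≤ p)] {n m : ℕ}
    (M : Matrix (Fin n) (Fin m) ℝ) : ℝ :=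
  sSup {r | ∃ x : Fin m → ℝ, vecSN p x = 1 ∧ r = vecSN p (M.mulVec x)}

noncomputable def coeErg {n : ℕ} (M : Matrix (Fin n) (Fin n) ℝ) : ℝ :=
  (1 / 2) * ⨆ i : Fin n, ⨆ j : Fin n, ∑ k, |M i k - M j k|

def IsStochastic {n : ℕ} (S : Matrix (Fin n) (Fin n) ℝ) : Prop :=
  (∀ i j, 0 ≤ S i j) ∧ ∀ i, ∑ j, S i j = 1

def IsScrambling {n : ℕ} (S : Matrix (Fin n) (Fin n) ℝ) : Prop :=
  IsStochastic S ∧ ∀ i j, ∃ k, 0 < S i k ∧ 0 < S j k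

def EqRowSum (n m : ℕ) : Submodule ℝ (Matrix (Fin n) (Fin m) ℝ) where
  carrier := {M | ∀ i i', ∑ j, M i j = ∑ j, M i' j}
  add_mem' := by
    intro A B hA hB i i'
    simp only [Matrix.add_apply, Finset.sum_add_distrib, hA i i', hB i i']
  zero_mem' := by intro i i'; simp
  smul_mem' := by
    intro c A hA i i'
    simp only [Matrix.smul_apply, smul_eq_mul, ← Finset.mul_sum, hA i i']

noncomputable def prodSeq {n : ℕ} (M : ℕ → Matrix (Fin n) (Fin n) ℝ) :
    ℕ → Matrix (Fin n) (Fin n) ℝ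
  | 0 => 1
  | (i + 1) => M i * prodSeq M i

/-! Because all row sums of `M₂` equal some `s`, `M₂` maps the constant-row matrix `𝟏c₁` to
`𝟏(s c₁)`; hence `(M₂ - 𝟏c₂)(M₁ - 𝟏c₁) = M₂M₁ - 𝟏c` for some row `c`. The induced norm of the
left side is at most the product of the two induced norms, and taking infima over `c₂`, `c₁`
gives the claim. -/

theorem Real.le_iInf_mul_iInf {ι κ : Sort*} [Nonempty ι] [Nonempty κ] {f : ι → ℝ} {g : κ → ℝ}
    {a : ℝ} (hf : ∀ i, 0 ≤ f i) (hg : ∀ j, 0 ≤ g j) (h : ∀ i j, a ≤ f i * g j) :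
    a ≤ (⨅ i, f i) * ⨅ j, g j := by
  rw [Real.iInf_mul_of_nonneg (Real.iInf_nonneg hg)]
  refine le_ciInf fun i => ?_
  rw [Real.mul_iInf_of_nonneg (hf i)]
  exact le_ciInf (h i)

namespace Matrix

variable {ι m n R : Type*} [Fintype m] [Ring R]

theorem mul_replicateRow_of_sum_row_eq {A : Matrix ι m R} {s : R} (hA : ∀ i, ∑ j, A i j = s)
    (c : n → R) : A * replicateRow m c = replicateRow ι (s • c) := by
  ext i j
  simp [mul_apply, ← Finset.sum_mul, hA i]

theorem sub_replicateRow_mul_sub_replicateRow {A : Matrix ι m R} {s : R}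
    (hA : ∀ i, ∑ j, A i j = s) (B : Matrix m n R) (c₂ : m → R) (c₁ : n → R) :
    (A - replicateRow ι c₂) * (B - replicateRow m c₁) =
      A * B - replicateRow ι (s • c₁ + c₂ ᵥ* (B - replicateRow m c₁)) := by
  rw [Matrix.sub_mul, Matrix.mul_sub, mul_replicateRow_of_sum_row_eq hA, ← replicateRow_vecMul,
    replicateRow_add, sub_sub]

end Matrix

section ConsensusSeminorm

variable (p : ℝ≥0∞) [Fact (1 ≤ p)] {n m k : ℕ}

theorem matPNorm_nonneg (M : Matrix (Fin n) (Fin m) ℝ) : 0 ≤ matPNorm p M :=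
  norm_nonneg _

theorem matPNorm_mul_le (A : Matrix (Fin n) (Fin m) ℝ) (B : Matrix (Fin m) (Fin k) ℝ) :
    matPNorm p (A * B) ≤ matPNorm p A * matPNorm p B := by
  unfold matPNorm
  rw [Matrix.toLin_mul (PiLp.basisFun p ℝ (Fin k)) (PiLp.basisFun p ℝ (Fin m))]
  exact ContinuousLinearMap.opNorm_comp_le
    (LinearMap.toContinuousLinearMap (toLin (PiLp.basisFun p ℝ (Fin m)) _ A))
    (LinearMap.toContinuousLinearMap (toLin _ (PiLp.basisFun p ℝ (Fin m)) B))

theorem metricSN_le_matPNorm_sub (M : Matrix (Fin n) (Fin m) ℝ) (c : Fin m → ℝ) :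
    metricSN p M ≤ matPNorm p (M - replicateRow (Fin n) c) :=
  ciInf_le ⟨0, by rintro r ⟨c', rfl⟩; exact matPNorm_nonneg p _⟩ c

end ConsensusSeminorm

/-- The metric consensus seminorm is submultiplicative: for any
M₁ ∈ ℝ^{m×k} and any M₂ ∈ ℝ^{n×m} whose row sums are all equal,
|M₂M₁|_p ≤ |M₂|_p · |M₁|_p for every p ∈ [1,∞]. -/
theorem metricSN_submultiplicative (n m k : ℕ) (p : ℝ≥0∞) [Fact (1 ≤ p)]
    (M₁ : Matrix (Fin m) (Fin k) ℝ) (M₂ : Matrix (Fin n) (Fin m) ℝ)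
    (h : ∀ i i', ∑ j, M₂ i j = ∑ j, M₂ i' j) :
    metricSN p (M₂ * M₁) ≤ metricSN p M₂ * metricSN p M₁ := by
  obtain ⟨s, hs⟩ : ∃ s, ∀ i, ∑ j, M₂ i j = s := by
    rcases isEmpty_or_nonempty (Fin n) with hn | ⟨⟨i₀⟩⟩
    · exact ⟨0, hn.elim⟩
    · exact ⟨_, fun i => h i i₀⟩
  refine Real.le_iInf_mul_iInf (fun _ => matPNorm_nonneg p _) (fun _ => matPNorm_nonneg p _)
    fun c₂ c₁ => ?_
  calc metricSN p (M₂ * M₁)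
      ≤ matPNorm p (M₂ * M₁ - replicateRow _ (s • c₁ + c₂ ᵥ* (M₁ - replicateRow _ c₁))) :=
        metricSN_le_matPNorm_sub p _ _
    _ = matPNorm p ((M₂ - replicateRow _ c₂) * (M₁ - replicateRow _ c₁)) := by
        rw [sub_replicateRow_mul_sub_replicateRow hs]
    _ ≤ matPNorm p (M₂ - replicateRow _ c₂) * matPNorm p (M₁ - replicateRow _ c₁) :=
        matPNorm_mul_le p _ _
end

section
/- Let M ∈ ℝ^{n×n} and let q = ⌊n/2⌋. Then the metric consensus seminorm for p = 1 satisfies |M|₁ = max over columns j of ( (sum of the q largest entries of column j) − (sum of the q smallest entries of column j) ). -/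
open Matrix Finset
open scoped ENNReal

/-!
The induced 1-norm of a matrix is its largest absolute column sum, and the columns of `M - 𝟏c`
only involve the separate entries of `c`, so `|M|₁` is the largest over the columns `x` of
`min_c ∑ᵢ |xᵢ - c|`. For `|A| = |B|` the difference `∑_A x - ∑_B x` is at most `∑ᵢ |xᵢ - c|` for
every `c`, and at a median `c` of `x` equality holds with `A` the `⌊n/2⌋` largest and `B` the
`⌊n/2⌋` smallest entries.
-/

section AbsoluteDeviation

variable {ι : Type*} [Fintype ι] [DecidableEq ι]

theorem sum_sub_sum_le_sum_abs_sub (x : ι → ℝ) (c : ℝ) {A B : Finset ι} (hAB : #A = #B) :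
    ∑ i ∈ A, x i - ∑ i ∈ B, x i ≤ ∑ i, |x i - c| := by
  have hcard : #(A \ B) = #(B \ A) := card_sdiff_comm hAB
  calc ∑ i ∈ A, x i - ∑ i ∈ B, x i
      = ∑ i ∈ A \ B, (x i - c) + ∑ i ∈ B \ A, (c - x i) := by
        rw [← sum_sdiff_sub_sum_sdiff, sum_sub_distrib, sum_sub_distrib, sum_const, sum_const,
          hcard]
        ring
    _ ≤ ∑ i ∈ A \ B, |x i - c| + ∑ i ∈ B \ A, |x i - c| := by
        gcongr with i _ i _
        · exact le_abs_self _
        · exact abs_sub_comm (x i) c ▸ le_abs_self _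
    _ = ∑ i ∈ A \ B ∪ B \ A, |x i - c| := (sum_union disjoint_sdiff_sdiff).symm
    _ ≤ ∑ i, |x i - c| := sum_le_univ_sum_of_nonneg fun _ => abs_nonneg _

theorem sup'_sub_inf'_le_sum_abs_sub (x : ι → ℝ) (c : ℝ) {q : ℕ}
    (h : (univ.powersetCard q).Nonempty) :
    (univ.powersetCard q).sup' h (fun A => ∑ i ∈ A, x i)
      - (univ.powersetCard q).inf' h (fun A => ∑ i ∈ A, x i) ≤ ∑ i, |x i - c| := by
  rw [sub_le_iff_le_add, sup'_le_iff]
  intro A hA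
  rw [← sub_le_iff_le_add', le_inf'_iff]
  intro B hB
  rw [sub_le_comm]
  exact sum_sub_sum_le_sum_abs_sub x c
    ((mem_powersetCard.mp hA).2.trans (mem_powersetCard.mp hB).2.symm)

theorem sum_abs_sub_eq_sum_sub_sum (x : ι → ℝ) {c : ℝ} {A B : Finset ι} (hAB : Disjoint A B)
    (hcard : #A = #B) (hA : ∀ i ∈ A, c ≤ x i) (hB : ∀ i ∈ B, x i ≤ c)
    (hrest : ∀ i, i ∉ A → i ∉ B → x i = c) :
    ∑ i, |x i - c| = ∑ i ∈ A, x i - ∑ i ∈ B, x i := by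
  have hsupp : ∑ i ∈ A ∪ B, |x i - c| = ∑ i, |x i - c| :=
    sum_subset (subset_univ _) fun i _ hi => by
      rw [mem_union, not_or] at hi
      simp [hrest i hi.1 hi.2]
  rw [← hsupp, sum_union hAB,
    sum_congr rfl fun i hi => abs_of_nonneg (sub_nonneg.mpr (hA i hi)),
    sum_congr rfl fun i hi => abs_of_nonpos (sub_nonpos.mpr (hB i hi)),
    sum_sub_distrib, sum_neg_distrib, sum_sub_distrib, sum_const, sum_const, hcard]
  ring

end AbsoluteDeviation

theorem exists_median_split {n : ℕ} (x : Fin n → ℝ) :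
    ∃ c : ℝ, ∃ A B : Finset (Fin n), Disjoint A B ∧ #A = n / 2 ∧ #B = n / 2 ∧
      (∀ i ∈ A, c ≤ x i) ∧ (∀ i ∈ B, x i ≤ c) ∧ ∀ i, i ∉ A → i ∉ B → x i = c := by
  obtain rfl | hn := n.eq_zero_or_pos
  · exact ⟨0, ∅, ∅, by simp⟩
  have hq : n / 2 < n := Nat.div_lt_self hn one_lt_two
  set σ := Tuple.sort x
  have hmono : Monotone (x ∘ σ) := Tuple.monotone_sort x
  have hbot : #{i : Fin n | (i : ℕ) < n / 2} = n / 2 := by rw [Fin.card_filter_val_lt]; omega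
  have htop : #{i : Fin n | n - n / 2 ≤ (i : ℕ)} = n / 2 := by
    have := card_filter_add_card_filter_not (s := (univ : Finset (Fin n)))
      (p := fun i => (i : ℕ) < n - n / 2)
    simp only [Fin.card_filter_val_lt, not_lt, card_univ, Fintype.card_fin] at this
    omega
  refine ⟨x (σ ⟨n / 2, hq⟩), ({i | n - n / 2 ≤ (i : ℕ)} : Finset (Fin n)).map σ.toEmbedding,
    ({i | (i : ℕ) < n / 2} : Finset (Fin n)).map σ.toEmbedding,
    (disjoint_map _).mpr (disjoint_filter.mpr fun i _ hi hi' => by omega),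
    by rw [card_map, htop], by rw [card_map, hbot], ?_, ?_, ?_⟩
  · simp only [forall_mem_map, mem_filter, mem_univ, true_and]
    exact fun i hi => hmono (show n / 2 ≤ (i : ℕ) by omega)
  · simp only [forall_mem_map, mem_filter, mem_univ, true_and]
    exact fun i hi => hmono (show (i : ℕ) ≤ n / 2 by omega)
  · refine σ.surjective.forall.mpr fun i hitop hibot => ?_
    simp only [mem_map_equiv, Equiv.symm_apply_apply, mem_filter, mem_univ, true_and, not_le,
      not_lt] at hitop hibot
    rw [show i = ⟨n / 2, hq⟩ from Fin.ext (show (i : ℕ) = n / 2 by omega)]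

theorem isLeast_range_sum_abs_sub {n : ℕ} (x : Fin n → ℝ)
    (h : (univ.powersetCard (n / 2)).Nonempty) :
    IsLeast (Set.range fun c => ∑ i, |x i - c|)
      ((univ.powersetCard (n / 2)).sup' h (fun A => ∑ i ∈ A, x i)
        - (univ.powersetCard (n / 2)).inf' h (fun A => ∑ i ∈ A, x i)) := by
  refine ⟨?_, Set.forall_mem_range.mpr fun c => sup'_sub_inf'_le_sum_abs_sub x c h⟩
  obtain ⟨c, A, B, hAB, hA, hB, hxA, hxB, hrest⟩ := exists_median_split x
  refine ⟨c, le_antisymm ?_ (sup'_sub_inf'_le_sum_abs_sub x c h)⟩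
  dsimp only
  rw [sum_abs_sub_eq_sum_sub_sum x hAB (hA.trans hB.symm) hxA hxB hrest]
  exact sub_le_sub (le_sup' (fun A => ∑ i ∈ A, x i) (mem_powersetCard.mpr ⟨subset_univ _, hA⟩))
    (inf'_le (fun A => ∑ i ∈ A, x i) (mem_powersetCard.mpr ⟨subset_univ _, hB⟩))

theorem isLeast_range_sup' {ι κ α : Type*} [Fintype ι] [SemilatticeSup α]
    (hne : (univ : Finset ι).Nonempty) {f : ι → κ → α} {s : ι → α}
    (h : ∀ i, IsLeast (Set.range (f i)) (s i)) :
    IsLeast (Set.range fun c : ι → κ => univ.sup' hne fun i => f i (c i)) (univ.sup' hne s) := by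
  choose c hc using fun i => (h i).1
  refine ⟨⟨c, by simp only [hc]⟩, Set.forall_mem_range.mpr fun d => ?_⟩
  exact sup'_le _ _ fun i hi => le_sup'_of_le _ hi ((h i).2 ⟨d i, rfl⟩)

theorem toLin_piLp_one_apply {n m : ℕ} (M : Matrix (Fin n) (Fin m) ℝ)
    (v : PiLp 1 (fun _ : Fin m => ℝ)) (i : Fin n) :
    Matrix.toLin (PiLp.basisFun 1 ℝ (Fin m)) (PiLp.basisFun 1 ℝ (Fin n)) M v i
      = ∑ j, M i j * v j := by
  simp [Matrix.toLin_apply, Matrix.mulVec, dotProduct, Pi.single_apply]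

theorem matPNorm_one_eq_sup'_sum_abs {n m : ℕ} (M : Matrix (Fin n) (Fin m) ℝ)
    (hne : (univ : Finset (Fin m)).Nonempty) :
    matPNorm 1 M = univ.sup' hne fun j => ∑ i, |M i j| := by
  rw [matPNorm]
  set L := LinearMap.toContinuousLinearMap
    (Matrix.toLin (PiLp.basisFun 1 ℝ (Fin m)) (PiLp.basisFun 1 ℝ (Fin n)) M)
  set K := univ.sup' hne fun j => ∑ i, |M i j|
  have hcol : ∀ j, ∑ i, |M i j| ≤ K := fun j => le_sup' (fun j => ∑ i, |M i j|) (mem_univ j)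
  refine le_antisymm (L.opNorm_le_bound ?_ fun v => ?_) (sup'_le _ _ fun j _ => ?_)
  · exact (sum_nonneg fun i _ => abs_nonneg _).trans (hcol hne.choose)
  · calc ‖L v‖ = ∑ i, |∑ j, M i j * v j| := by
          simp [L, PiLp.norm_eq_of_L1, toLin_piLp_one_apply]
      _ ≤ ∑ i, ∑ j, |M i j| * |v j| := by
          gcongr with i
          exact (abs_sum_le_sum_abs _ _).trans_eq (by simp only [abs_mul])
      _ = ∑ j, (∑ i, |M i j|) * |v j| := by rw [sum_comm]; simp only [sum_mul]
      _ ≤ ∑ j, K * |v j| := by gcongr with j; exact hcol j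
      _ = K * ‖v‖ := by simp [PiLp.norm_eq_of_L1, mul_sum]
  · have hLe := L.le_opNorm (PiLp.basisFun 1 ℝ (Fin m) j)
    have hLcol : L (PiLp.basisFun 1 ℝ (Fin m) j) = WithLp.toLp 1 fun i => M i j := by
      ext i
      simp [L, toLin_piLp_one_apply]
    rw [hLcol] at hLe
    simpa [PiLp.norm_eq_of_L1, Pi.single_apply] using hLe

/-- For M ∈ ℝ^{n×n} and q = ⌊n/2⌋, the metric consensus seminorm for
p = 1 equals the maximum over columns j of the sum of the q largest entries of
column j minus the sum of the q smallest entries of column j (expressed here as the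
maximum, resp. minimum, over all subsets of q row indices of the corresponding
partial column sums). -/
theorem metricSN_one_eq (n : ℕ) (hn : 0 < n) (M : Matrix (Fin n) (Fin n) ℝ) :
    metricSN 1 M =
      Finset.univ.sup'
        (Finset.univ_nonempty_iff.mpr (Fin.pos_iff_nonempty.mp hn))
        (fun j : Fin n =>
          ((Finset.univ.powersetCard (n / 2)).sup'
            ((Finset.powersetCard_nonempty).mpr
              (by simpa using Nat.div_le_self n 2))
            fun A => ∑ i ∈ A, M i j)
          -
          ((Finset.univ.powersetCard (n / 2)).inf'
            ((Finset.powersetCard_nonempty).mpr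
              (by simpa using Nat.div_le_self n 2))
            fun A => ∑ i ∈ A, M i j)) := by
  have hne : (univ : Finset (Fin n)).Nonempty := univ_nonempty_iff.mpr (Fin.pos_iff_nonempty.mp hn)
  unfold metricSN
  simp_rw [matPNorm_one_eq_sup'_sum_abs _ hne, Matrix.sub_apply, Matrix.of_apply]
  exact (isLeast_range_sup' hne fun j => isLeast_range_sum_abs_sub (M · j) _).isGLB.ciInf_eq
end

section
/- If M ∈ ℝ^{n×n} is doubly stochastic (entrywise nonnegative with all row sums and all column sums equal to 1), then the metric consensus seminorm for p = 2 satisfies |M|₂ = σ₂(M), the second largest singular value of M. -/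
open Matrix Finset
open scoped ENNReal

/-- The singular values of a real square matrix M: the square roots of the
eigenvalues of MᵀM. -/
noncomputable def singularValues {n : ℕ} (M : Matrix (Fin n) (Fin n) ℝ) : Fin n → ℝ :=
  fun i => Real.sqrt ((show (Mᵀ * M).IsHermitian from by
    simpa only [Matrix.conjTranspose_eq_transpose_of_trivial] using
      Matrix.isHermitian_conjTranspose_mul_self M).eigenvalues i)

/-! Write `A = Mᵀ M`. Since `M` is doubly stochastic, `‖M‖₂ ≤ 1`, so the eigenvalues of `A`
are at most `1`, and `𝟏` is an eigenvector of `A` for the eigenvalue `1`.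

For every row `c`, `(M - 𝟏c) x = M x - (c ⬝ᵥ x) 𝟏`, and for `x ⊥ 𝟏` also `M x ⊥ 𝟏` (column
sums), so `‖(M - 𝟏c) x‖ ≥ ‖M x‖`. A unit vector `x ⊥ 𝟏` in the span of the eigenvectors of the
two largest eigenvalues `λ₁ ≥ λ₂` of `A` has `‖M x‖² ≥ λ₂`, so `|M|₂ ≥ √λ₂`.

Conversely, `M - 𝟏𝟏ᵀ/n = M (I - 𝟏𝟏ᵀ/n)` (row sums), and on `𝟏ᗮ` the quadratic form of `A` is at
most `λ₂`: either `λ₁ = λ₂`, or `λ₁ > λ₂` and the eigenvector `𝟏` of the eigenvalue `1 ≥ λ₁`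
must span the `λ₁`-eigenspace. Hence `‖M - 𝟏𝟏ᵀ/n‖₂ ≤ √λ₂`. -/

open scoped RealInnerProductSpace InnerProduct

theorem exists_sq_add_sq_eq_one_and_mul_add_mul_eq_zero (p q : ℝ) :
    ∃ a c : ℝ, a ^ 2 + c ^ 2 = 1 ∧ a * p + c * q = 0 := by
  rcases eq_or_ne (p ^ 2 + q ^ 2) 0 with h | h
  · refine ⟨1, 0, by norm_num, ?_⟩
    nlinarith [sq_nonneg p, sq_nonneg q]
  · have hs : √(p ^ 2 + q ^ 2) ^ 2 = p ^ 2 + q ^ 2 := Real.sq_sqrt (by positivity)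
    have hs0 : √(p ^ 2 + q ^ 2) ≠ 0 := by positivity
    refine ⟨-q / √(p ^ 2 + q ^ 2), p / √(p ^ 2 + q ^ 2), ?_, by field_simp; ring⟩
    rw [div_pow, div_pow, hs]
    field_simp
    ring

theorem norm_le_norm_sub_of_inner_eq_zero {F : Type*} [NormedAddCommGroup F]
    [InnerProductSpace ℝ F] {x y : F} (h : ⟪x, y⟫ = 0) : ‖x‖ ≤ ‖x - y‖ := by
  have := norm_sub_sq_eq_norm_sq_add_norm_sq_real h
  nlinarith [norm_nonneg x, norm_nonneg y, norm_nonneg (x - y)]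

section Eigenbasis

variable {ι E : Type*} [Fintype ι] [NormedAddCommGroup E] [InnerProductSpace ℝ E]
  {T : E →ₗ[ℝ] E} {b : OrthonormalBasis ι ℝ E} {μ : ι → ℝ}

theorem OrthonormalBasis.inner_map_eq_mul_inner (hb : ∀ i, T (b i) = μ i • b i) (i : ι)
    (y : E) : ⟪b i, T y⟫ = μ i * ⟪b i, y⟫ := by
  conv_lhs => rw [← b.sum_repr' y]
  simp only [map_sum, map_smul, hb, smul_smul]
  rw [b.orthonormal.inner_right_sum _ (Finset.mem_univ i), mul_comm]

theorem OrthonormalBasis.inner_map_self_eq_sum (hb : ∀ i, T (b i) = μ i • b i) (y : E) :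
    ⟪y, T y⟫ = ∑ i, μ i * ⟪b i, y⟫ ^ 2 := by
  rw [← b.sum_inner_mul_inner y (T y)]
  refine Finset.sum_congr rfl fun i _ => ?_
  rw [b.inner_map_eq_mul_inner hb, real_inner_comm]
  ring

theorem OrthonormalBasis.exists_norm_eq_one_inner_eq_zero_le_inner_map_self
    (hb : ∀ i, T (b i) = μ i • b i) {t r : ι} (htr : t ≠ r) (hrt : μ r ≤ μ t) (v : E) :
    ∃ x : E, ‖x‖ = 1 ∧ ⟪v, x⟫ = 0 ∧ μ r ≤ ⟪x, T x⟫ := by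
  obtain ⟨a, c, hac, hv⟩ := exists_sq_add_sq_eq_one_and_mul_add_mul_eq_zero ⟪v, b t⟫ ⟪v, b r⟫
  have hbb (i : ι) : ⟪b i, b i⟫ = 1 := by rw [real_inner_self_eq_norm_sq, b.norm_eq_one, one_pow]
  have htr' : ⟪b t, b r⟫ = 0 := b.orthonormal.2 htr
  have hrt' : ⟪b r, b t⟫ = 0 := b.orthonormal.2 htr.symm
  refine ⟨a • b t + c • b r, ?_, ?_, ?_⟩
  · rw [← sq_eq_sq₀ (norm_nonneg _) zero_le_one, ← real_inner_self_eq_norm_sq]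
    simp only [inner_add_left, inner_add_right, real_inner_smul_left, real_inner_smul_right, hbb,
      htr', hrt']
    linear_combination hac
  · rw [inner_add_right, real_inner_smul_right, real_inner_smul_right]
    linarith
  · simp only [map_add, map_smul, hb, inner_add_left, inner_add_right, real_inner_smul_left,
      real_inner_smul_right, hbb, htr', hrt']
    linear_combination mul_nonneg (sq_nonneg a) (sub_nonneg.2 hrt) - μ r * hac

theorem OrthonormalBasis.eq_inner_smul_of_apply_eq_smul (hb : ∀ i, T (b i) = μ i • b i) {t : ι}
    {c : ℝ} (hc : ∀ i ≠ t, μ i ≠ c) {v : E} (hv : T v = c • v) : v = ⟪b t, v⟫ • b t := by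
  have hvi (i : ι) (hi : i ≠ t) : ⟪b i, v⟫ = 0 := by
    have h := b.inner_map_eq_mul_inner hb i v
    rw [hv, real_inner_smul_right] at h
    have h' : (μ i - c) * ⟪b i, v⟫ = 0 := by linear_combination -h
    exact (mul_eq_zero.1 h').resolve_left (sub_ne_zero.2 (hc i hi))
  conv_lhs => rw [← b.sum_repr' v]
  exact Finset.sum_eq_single t (fun i _ hi => by rw [hvi i hi, zero_smul]) (by simp)

theorem OrthonormalBasis.inner_map_self_le_of_inner_eq_zero (hb : ∀ i, T (b i) = μ i • b i)
    {t r : ι} (hsecond : ∀ i ≠ t, μ i ≤ μ r) {v : E} {c : ℝ} (hv : T v = c • v) (hv0 : v ≠ 0)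
    (htc : μ t ≤ c) {y : E} (hy : ⟪v, y⟫ = 0) : ⟪y, T y⟫ ≤ μ r * ‖y‖ ^ 2 := by
  rw [b.inner_map_self_eq_sum hb, ← b.sum_sq_inner_right, Finset.mul_sum]
  refine Finset.sum_le_sum fun i _ => ?_
  obtain rfl | hit := eq_or_ne i t
  · rcases le_or_gt (μ i) (μ r) with h | h
    · exact mul_le_mul_of_nonneg_right h (sq_nonneg _)
    have hvt := b.eq_inner_smul_of_apply_eq_smul hb
      (fun j hj => ((hsecond j hj).trans_lt (h.trans_le htc)).ne) hv
    have hyt : ⟪b i, y⟫ = 0 := by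
      rw [hvt, real_inner_smul_left] at hy
      exact (mul_eq_zero.1 hy).resolve_left fun h0 => hv0 (by rw [hvt, h0, zero_smul])
    simp [hyt]
  · exact mul_le_mul_of_nonneg_right (hsecond i hit) (sq_nonneg _)

end Eigenbasis

section AdjointCompSelf

variable {ι E : Type*} [Fintype ι] [NormedAddCommGroup E] [InnerProductSpace ℝ E]
  [CompleteSpace E] {L : E →L[ℝ] E} {b : OrthonormalBasis ι ℝ E} {μ : ι → ℝ}

theorem eigenvalue_adjoint_comp_self_eq_norm_sq (hb : ∀ i, (L† ∘L L) (b i) = μ i • b i)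
    (i : ι) : μ i = ‖L (b i)‖ ^ 2 := by
  rw [L.apply_norm_sq_eq_inner_adjoint_right, hb, real_inner_smul_right,
    real_inner_self_eq_norm_sq, b.norm_eq_one, one_pow, mul_one]
  rfl

theorem sqrt_le_opNorm_of_apply_eq_sub_smul (hb : ∀ i, (L† ∘L L) (b i) = μ i • b i) {t r : ι}
    (htr : t ≠ r) (hrt : μ r ≤ μ t) {e : E} (he : (L†) e = e) {c : E} {N : E →L[ℝ] E}
    (hN : ∀ x, N x = L x - ⟪c, x⟫ • e) : √(μ r) ≤ ‖N‖ := by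
  obtain ⟨x, hx1, hex, hμx⟩ :=
    b.exists_norm_eq_one_inner_eq_zero_le_inner_map_self (T := (L† ∘L L : E →L[ℝ] E)) hb htr hrt e
  have hLx : ⟪L x, ⟪c, x⟫ • e⟫ = 0 := by
    rw [real_inner_smul_right, ← L.adjoint_inner_right, he, real_inner_comm e x, hex, mul_zero]
  calc √(μ r) ≤ ‖L x‖ := by
        rw [Real.sqrt_le_iff, L.apply_norm_sq_eq_inner_adjoint_right]
        exact ⟨norm_nonneg _, hμx⟩
    _ ≤ ‖N x‖ := (hN x).symm ▸ norm_le_norm_sub_of_inner_eq_zero hLx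
    _ ≤ ‖N‖ := by simpa [hx1] using N.le_opNorm x

theorem opNorm_le_sqrt_of_apply_eq_sub_starProjection (hb : ∀ i, (L† ∘L L) (b i) = μ i • b i)
    {t r : ι} (hsecond : ∀ i ≠ t, μ i ≤ μ r) (hL : ‖L‖ ≤ 1) {e : E} (he0 : e ≠ 0) (hLe : L e = e)
    (he : (L†) e = e) {N : E →L[ℝ] E} (hN : ∀ x, N x = L x - (ℝ ∙ e).starProjection x) :
    ‖N‖ ≤ √(μ r) := by
  refine N.opNorm_le_bound (Real.sqrt_nonneg _) fun x => ?_
  set y := (ℝ ∙ e)ᗮ.starProjection x with hy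
  have hNx : N x = L y := by
    rw [hN, hy, Submodule.starProjection_orthogonal, _root_.sub_apply, map_sub,
      Submodule.starProjection_singleton, map_smul, hLe]
    rfl
  have hey : ⟪e, y⟫ = 0 :=
    Submodule.mem_orthogonal_singleton_iff_inner_right.1 (Submodule.starProjection_apply_mem _ x)
  have hTe : (L† ∘L L) e = (1 : ℝ) • e := by simp [hLe, he]
  have hμt : μ t ≤ 1 := by
    rw [eigenvalue_adjoint_comp_self_eq_norm_sq hb]
    simpa using L.le_of_opNorm_le hL (b t)
  have hLy : ‖L y‖ ^ 2 ≤ μ r * ‖y‖ ^ 2 := by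
    rw [L.apply_norm_sq_eq_inner_adjoint_right]
    exact b.inner_map_self_le_of_inner_eq_zero (T := (L† ∘L L : E →L[ℝ] E)) hb hsecond hTe he0
      hμt hey
  calc ‖N x‖ = ‖L y‖ := by rw [hNx]
    _ ≤ √(μ r) * ‖y‖ := by
        rw [← Real.sqrt_sq (norm_nonneg y), ← Real.sqrt_mul' _ (sq_nonneg _)]
        exact Real.le_sqrt_of_sq_le hLy
    _ ≤ √(μ r) * ‖x‖ := by gcongr; exact Submodule.norm_starProjection_apply_le _ x

end AdjointCompSelf

section Matrix

variable {ι : Type*} [Fintype ι]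

theorem starProjection_span_one_apply (x : EuclideanSpace ℝ ι) :
    (ℝ ∙ WithLp.toLp 2 (1 : ι → ℝ)).starProjection x =
      ⟪WithLp.toLp 2 fun _ => (Fintype.card ι : ℝ)⁻¹, x⟫ • WithLp.toLp 2 1 := by
  rw [Submodule.starProjection_singleton, EuclideanSpace.real_norm_sq_eq]
  simp [PiLp.inner_apply, div_eq_mul_inv, Finset.sum_mul]

variable [DecidableEq ι]

theorem matPNorm_two_eq_norm_toEuclideanCLM {n : ℕ} (N : Matrix (Fin n) (Fin n) ℝ) :
    matPNorm 2 N = ‖toEuclideanCLM (𝕜 := ℝ) N‖ :=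
  rfl

theorem toEuclideanCLM_sub_replicateRow_apply (M : Matrix ι ι ℝ) (c : ι → ℝ)
    (x : EuclideanSpace ℝ ι) :
    toEuclideanCLM (𝕜 := ℝ) (M - replicateRow ι c) x =
      toEuclideanCLM (𝕜 := ℝ) M x - ⟪WithLp.toLp 2 c, x⟫ • WithLp.toLp 2 1 := by
  ext k
  simp [mulVec, dotProduct, replicateRow_apply, PiLp.inner_apply, mul_comm]

variable {M : Matrix ι ι ℝ}

theorem norm_toEuclideanCLM_le_one_of_mem_doublyStochastic (hM : M ∈ doublyStochastic ℝ ι) :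
    ‖toEuclideanCLM (𝕜 := ℝ) M‖ ≤ 1 := by
  refine ContinuousLinearMap.opNorm_le_bound _ zero_le_one fun x => ?_
  rw [one_mul, ← sq_le_sq₀ (norm_nonneg _) (norm_nonneg _), EuclideanSpace.real_norm_sq_eq,
    EuclideanSpace.real_norm_sq_eq]
  calc ∑ i, (toEuclideanCLM (𝕜 := ℝ) M x i) ^ 2 ≤ ∑ i, ∑ j, M i j * x j ^ 2 := by
        refine Finset.sum_le_sum fun i _ => ?_
        calc (∑ j, M i j * x j) ^ 2 ≤ (∑ j, M i j) * ∑ j, M i j * x j ^ 2 :=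
              Finset.sum_sq_le_sum_mul_sum_of_sq_le_mul _ (fun j _ => hM.1 i j)
                (fun j _ => mul_nonneg (hM.1 i j) (sq_nonneg _)) fun j _ => le_of_eq (by ring)
          _ = ∑ j, M i j * x j ^ 2 := by rw [sum_row_of_mem_doublyStochastic hM, one_mul]
    _ = ∑ j, x j ^ 2 := by
        rw [Finset.sum_comm]
        simp [← Finset.sum_mul, sum_col_of_mem_doublyStochastic hM]

theorem toEuclideanCLM_one_of_mem_doublyStochastic (hM : M ∈ doublyStochastic ℝ ι) :
    toEuclideanCLM (𝕜 := ℝ) M (WithLp.toLp 2 1) = WithLp.toLp 2 1 := by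
  simp [toEuclideanCLM_toLp, mulVec_one_of_mem_doublyStochastic hM]

theorem adjoint_toEuclideanCLM_one_of_mem_doublyStochastic (hM : M ∈ doublyStochastic ℝ ι) :
    ((toEuclideanCLM (𝕜 := ℝ) M)†) (WithLp.toLp 2 1) = WithLp.toLp 2 1 := by
  rw [← ContinuousLinearMap.star_eq_adjoint, ← map_star, toEuclideanCLM_toLp,
    star_eq_conjTranspose, conjTranspose_eq_transpose_of_trivial, mulVec_transpose,
    one_vecMul_of_mem_doublyStochastic hM]

theorem adjoint_comp_self_toEuclideanCLM_eigenvectorBasis (hA : (Mᵀ * M).IsHermitian) (i : ι) :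
    ((toEuclideanCLM (𝕜 := ℝ) M)† ∘L toEuclideanCLM (𝕜 := ℝ) M) (hA.eigenvectorBasis i) =
      hA.eigenvalues i • hA.eigenvectorBasis i := by
  rw [← ContinuousLinearMap.star_eq_adjoint, ← map_star, ← ContinuousLinearMap.mul_def,
    ← map_mul, star_eq_conjTranspose, conjTranspose_eq_transpose_of_trivial]
  exact WithLp.ofLp_injective 2 (hA.mulVec_eigenvectorBasis i)

end Matrix

theorem Tuple.apply_le_apply_sort_of_ne_last {α : Type*} [LinearOrder α] {n : ℕ} (hn : 2 ≤ n)
    (f : Fin n → α) {i : Fin n}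
    (hi : i ≠ Tuple.sort f ⟨n - 1, Nat.sub_lt_self one_pos (one_le_two.trans hn)⟩) :
    f i ≤ f (Tuple.sort f ⟨n - 2, Nat.sub_lt_self two_pos hn⟩) := by
  have hne : ((Tuple.sort f).symm i : ℕ) ≠ n - 1 := fun h =>
    hi (by rw [← Equiv.symm_apply_eq]; exact Fin.ext h)
  have hlt := ((Tuple.sort f).symm i).isLt
  have hle : (Tuple.sort f).symm i ≤ ⟨n - 2, Nat.sub_lt_self two_pos hn⟩ :=
    Fin.le_iff_val_le_val.2 (show ((Tuple.sort f).symm i : ℕ) ≤ n - 2 by omega)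
  simpa using Tuple.monotone_sort f hle

theorem metricSN_two_eq_sqrt_eigenvalue_of_mem_doublyStochastic {n : ℕ}
    {M : Matrix (Fin n) (Fin n) ℝ} (hM : M ∈ doublyStochastic ℝ (Fin n))
    (hA : (Mᵀ * M).IsHermitian) {t r : Fin n} (htr : t ≠ r)
    (hrt : hA.eigenvalues r ≤ hA.eigenvalues t)
    (hsecond : ∀ i ≠ t, hA.eigenvalues i ≤ hA.eigenvalues r) :
    metricSN 2 M = √(hA.eigenvalues r) := by
  have hb := adjoint_comp_self_toEuclideanCLM_eigenvectorBasis hA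
  have he0 : WithLp.toLp 2 (1 : Fin n → ℝ) ≠ 0 := fun h => by
    simpa using congrArg (fun v : EuclideanSpace ℝ (Fin n) => v t) h
  refine le_antisymm ((ciInf_le ⟨0, ?_⟩ fun _ => (Fintype.card (Fin n) : ℝ)⁻¹).trans ?_)
    (le_ciInf fun c => ?_)
  · rintro _ ⟨c, rfl⟩
    exact norm_nonneg _
  · rw [matPNorm_two_eq_norm_toEuclideanCLM]
    refine opNorm_le_sqrt_of_apply_eq_sub_starProjection hb hsecond
      (norm_toEuclideanCLM_le_one_of_mem_doublyStochastic hM) he0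
      (toEuclideanCLM_one_of_mem_doublyStochastic hM)
      (adjoint_toEuclideanCLM_one_of_mem_doublyStochastic hM) fun x => ?_
    rw [starProjection_span_one_apply]
    exact toEuclideanCLM_sub_replicateRow_apply M _ x
  · rw [matPNorm_two_eq_norm_toEuclideanCLM]
    exact sqrt_le_opNorm_of_apply_eq_sub_smul hb htr hrt
      (adjoint_toEuclideanCLM_one_of_mem_doublyStochastic hM)
      (toEuclideanCLM_sub_replicateRow_apply M c)

/-- If M ∈ ℝ^{n×n} is doubly stochastic, then the metric consensus
seminorm for p = 2 equals σ₂(M), the second largest singular value of M (the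
second-to-last entry of the singular values sorted in increasing order). -/
theorem metricSN_two_doubly_stochastic (n : ℕ) (hn : 2 ≤ n)
    (M : Matrix (Fin n) (Fin n) ℝ)
    (hnonneg : ∀ i j, 0 ≤ M i j)
    (hrow : ∀ i, ∑ j, M i j = 1)
    (hcol : ∀ j, ∑ i, M i j = 1) :
    metricSN 2 M =
      (singularValues M ∘ Tuple.sort (singularValues M)) ⟨n - 2, by omega⟩ := by
  have hA : (Mᵀ * M).IsHermitian := by
    simpa [conjTranspose_eq_transpose_of_trivial] using isHermitian_conjTranspose_mul_self M
  set σ := Tuple.sort hA.eigenvalues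
  have hσ : σ ⟨n - 1, by omega⟩ ≠ σ ⟨n - 2, by omega⟩ :=
    σ.injective.ne (Fin.ne_of_val_ne (show n - 1 ≠ n - 2 by omega))
  have hval := metricSN_two_eq_sqrt_eigenvalue_of_mem_doublyStochastic
    (mem_doublyStochastic_iff_sum.2 ⟨hnonneg, hrow, hcol⟩) hA hσ
    (Tuple.monotone_sort hA.eigenvalues (Fin.mk_le_mk.2 (show n - 2 ≤ n - 1 by omega)))
    fun _ => Tuple.apply_le_apply_sort_of_ne_last hn hA.eigenvalues
  have hsort : singularValues M ∘ σ = singularValues M ∘ Tuple.sort (singularValues M) :=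
    Tuple.comp_sort_eq_comp_iff_monotone.2 fun i j hij =>
      Real.sqrt_le_sqrt (Tuple.monotone_sort hA.eigenvalues hij)
  rw [hval, ← hsort]
  rfl
end

section
/- Let S ∈ ℝ^{n×n} be a stochastic matrix and let [[S]] denote the n×n 0–1 matrix whose (i,j) entry is 1 if s_{ij} ≠ 0 and 0 otherwise. Then the metric consensus seminorm satisfies |S|_∞ < 1 if and only if there exists an entrywise nonnegative vector y ∈ ℝ^n such that (𝟏𝟏ᵀ − 2[[S]])y < 0 entrywise. -/
open Matrix Finset
open scoped ENNReal

open Filter Topology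

/-!
`|S|_∞ < 1` means that some row vector `c` makes every row sum `∑ⱼ |sᵢⱼ - cⱼ|` smaller than `1`.
For every `c` this row sum is at least `1 + ∑ⱼ (𝟏𝟏ᵀ - 2[[S]])ᵢⱼ max(cⱼ, 0)`, with equality when
`c ≥ 0` and `cⱼ ≤ sᵢⱼ` wherever `sᵢⱼ ≠ 0`. Hence `y = max(c, 0)` certifies the inequality
system, and conversely a certificate `y`, scaled down to `c = εy` to fit under the positive
entries of `S`, gives row sums `1 + ε ∑ⱼ (𝟏𝟏ᵀ - 2[[S]])ᵢⱼ yⱼ < 1`.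
-/

lemma toLin_top_apply {n m : ℕ} (M : Matrix (Fin n) (Fin m) ℝ)
    (x : PiLp ⊤ (fun _ : Fin m => ℝ)) (i : Fin n) :
    (LinearMap.toContinuousLinearMap
      (Matrix.toLin (PiLp.basisFun ⊤ ℝ (Fin m)) (PiLp.basisFun ⊤ ℝ (Fin n)) M)) x i
      = ∑ j, M i j * x j := by
  rw [LinearMap.coe_toContinuousLinearMap']
  simp only [Matrix.toLin_apply, PiLp.basisFun_apply]
  rw [WithLp.ofLp_sum, Finset.sum_apply]
  simp [Matrix.mulVec, dotProduct, mul_ite]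

lemma sum_abs_le_matPNorm_top {n m : ℕ} (M : Matrix (Fin n) (Fin m) ℝ) (i : Fin n) :
    ∑ j, |M i j| ≤ matPNorm ⊤ M := by
  set f := LinearMap.toContinuousLinearMap
    (Matrix.toLin (PiLp.basisFun ⊤ ℝ (Fin m)) (PiLp.basisFun ⊤ ℝ (Fin n)) M)
  let x : PiLp ⊤ (fun _ : Fin m => ℝ) := WithLp.toLp ⊤ fun j => if 0 ≤ M i j then 1 else -1
  have hx : ‖x‖ ≤ 1 :=
    Real.iSup_le (fun j => by simp only [x]; split_ifs <;> simp) zero_le_one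
  calc ∑ j, |M i j| = f x i := by
        rw [toLin_top_apply]
        refine Finset.sum_congr rfl fun j _ => ?_
        simp only [x]
        split_ifs with h
        · rw [abs_of_nonneg h, mul_one]
        · rw [abs_of_neg (not_le.mp h), mul_neg_one]
    _ ≤ ‖f x‖ := (le_abs_self _).trans (PiLp.norm_apply_le (f x) i)
    _ ≤ ‖f‖ := f.unit_le_opNorm x hx

lemma matPNorm_top_eq_iSup {n m : ℕ} (M : Matrix (Fin n) (Fin m) ℝ) :
    matPNorm ⊤ M = ⨆ i, ∑ j, |M i j| := by
  have hnonneg : 0 ≤ ⨆ i, ∑ j, |M i j| :=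
    Real.iSup_nonneg fun i => Finset.sum_nonneg fun j _ => abs_nonneg _
  refine le_antisymm (ContinuousLinearMap.opNorm_le_bound _ hnonneg fun x => ?_)
    (Real.iSup_le (sum_abs_le_matPNorm_top M) (norm_nonneg _))
  refine Real.iSup_le (fun i => ?_) (mul_nonneg hnonneg (norm_nonneg x))
  rw [Real.norm_eq_abs, toLin_top_apply]
  calc |∑ j, M i j * x j| ≤ ∑ j, |M i j| * ‖x‖ := by
        refine (Finset.abs_sum_le_sum_abs _ _).trans (Finset.sum_le_sum fun j _ => ?_)
        rw [abs_mul]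
        exact mul_le_mul_of_nonneg_left (PiLp.norm_apply_le x j) (abs_nonneg _)
    _ = (∑ j, |M i j|) * ‖x‖ := (Finset.sum_mul ..).symm
    _ ≤ (⨆ i, ∑ j, |M i j|) * ‖x‖ :=
        mul_le_mul_of_nonneg_right
          (le_ciSup (Finite.bddAbove_range fun i => ∑ j, |M i j|) i) (norm_nonneg x)

lemma Real.iSup_lt_iff_of_finite {ι : Type*} [Finite ι] {f : ι → ℝ} {r : ℝ} (hr : 0 < r) :
    ⨆ i, f i < r ↔ ∀ i, f i < r := by
  refine ⟨fun h i => (le_ciSup (Finite.bddAbove_range f) i).trans_lt h, fun h => ?_⟩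
  cases isEmpty_or_nonempty ι
  · simpa using hr
  · obtain ⟨i, hi⟩ := exists_eq_ciSup_of_finite (f := f)
    exact hi ▸ h i

lemma metricSN_top_lt_iff {n m : ℕ} (M : Matrix (Fin n) (Fin m) ℝ) {r : ℝ} (hr : 0 < r) :
    metricSN ⊤ M < r ↔ ∃ c : Fin m → ℝ, ∀ i, ∑ j, |M i j - c j| < r := by
  rw [metricSN, ciInf_lt_iff ⟨0, by rintro _ ⟨c, rfl⟩; exact norm_nonneg _⟩]
  simp only [matPNorm_top_eq_iSup, Real.iSup_lt_iff_of_finite hr, Matrix.sub_apply, of_apply]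

/-- `+1` off the support, `-1` on it: the entries of `𝟏𝟏ᵀ − 2[[S]]`. -/
noncomputable def supportSign (s : ℝ) : ℝ := 1 - 2 * (if s ≠ 0 then (1 : ℝ) else 0)

lemma add_supportSign_mul_le_abs_sub (s c : ℝ) :
    s + supportSign s * max c 0 ≤ |s - c| := by
  by_cases h : s = 0
  · simpa [supportSign, h] using max_le (le_abs_self c) (abs_nonneg c)
  · simp only [supportSign, h, ne_eq, not_false_eq_true, if_true]
    linarith [le_abs_self (s - c), le_max_left c 0]

lemma abs_sub_eq_add_supportSign_mul {s c : ℝ} (hc : 0 ≤ c) (hcs : s ≠ 0 → c ≤ s) :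
    |s - c| = s + supportSign s * c := by
  by_cases h : s = 0
  · simp [supportSign, h, abs_of_nonneg hc]
  · simp only [supportSign, h, ne_eq, not_false_eq_true, if_true]
    rw [abs_of_nonneg (sub_nonneg.mpr (hcs h))]
    ring

section
variable {ι : Type*} [Fintype ι]

lemma sum_add_sum_supportSign_mul_le_sum_abs_sub (s c : ι → ℝ) :
    ∑ j, s j + ∑ j, supportSign (s j) * max (c j) 0 ≤ ∑ j, |s j - c j| := by
  rw [← Finset.sum_add_distrib]
  exact Finset.sum_le_sum fun j _ => add_supportSign_mul_le_abs_sub (s j) (c j)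

lemma sum_abs_sub_eq_sum_add_sum_supportSign_mul {s c : ι → ℝ} (hc : ∀ j, 0 ≤ c j)
    (hcs : ∀ j, s j ≠ 0 → c j ≤ s j) :
    ∑ j, |s j - c j| = ∑ j, s j + ∑ j, supportSign (s j) * c j := by
  rw [← Finset.sum_add_distrib]
  exact Finset.sum_congr rfl fun j _ => abs_sub_eq_add_supportSign_mul (hc j) (hcs j)

end

lemma exists_pos_forall_mul_le {ι : Type*} [Finite ι] (s y : ι → ℝ) (hs : ∀ j, 0 ≤ s j) :
    ∃ ε > 0, ∀ j, s j ≠ 0 → ε * y j ≤ s j := by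
  have hsmall : ∀ᶠ ε in 𝓝[>] (0 : ℝ), ∀ j, s j ≠ 0 → ε * y j ≤ s j := by
    refine nhdsWithin_le_nhds (Filter.eventually_all.2 fun j => ?_)
    by_cases hj : s j = 0
    · simp [hj]
    · have hlim : Tendsto (fun ε : ℝ => ε * y j) (𝓝 0) (𝓝 0) :=
        (continuous_mul_const (y j)).tendsto' 0 0 (zero_mul _)
      filter_upwards [hlim.eventually_lt_const ((hs j).lt_of_ne' hj)] with ε hε _
      exact hε.le
  obtain ⟨ε, hε, hpos⟩ := (hsmall.and self_mem_nhdsWithin).exists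
  exact ⟨ε, hpos, hε⟩

/-- For a stochastic matrix S ∈ ℝ^{n×n}, the metric consensus seminorm
satisfies |S|_∞ < 1 iff there exists an entrywise nonnegative vector y with
(𝟏𝟏ᵀ − 2[[S]])y < 0 entrywise, where [[S]] is the 0–1 pattern matrix of S. -/
theorem metricSN_infty_lt_one_iff (n : ℕ) (S : Matrix (Fin n) (Fin n) ℝ)
    (hS : IsStochastic S) :
    metricSN ⊤ S < 1 ↔
      ∃ y : Fin n → ℝ, (∀ i, 0 ≤ y i) ∧
        ∀ i, ∑ j, ((1 : ℝ) - 2 * (if S i j ≠ 0 then (1 : ℝ) else 0)) * y j < 0 := by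
  change _ ↔ ∃ y : Fin n → ℝ, (∀ i, 0 ≤ y i) ∧ ∀ i, ∑ j, supportSign (S i j) * y j < 0
  obtain ⟨hnonneg, hrow⟩ := hS
  rw [metricSN_top_lt_iff S one_pos]
  constructor
  · rintro ⟨c, hc⟩
    refine ⟨fun j => max (c j) 0, fun j => le_max_right _ _, fun i => ?_⟩
    linarith [hc i, hrow i, sum_add_sum_supportSign_mul_le_sum_abs_sub (S i) c]
  · rintro ⟨y, hy, hneg⟩
    obtain ⟨ε, hε, hεy⟩ :=
      exists_pos_forall_mul_le (fun p : Fin n × Fin n => S p.1 p.2) (fun p => y p.2)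
        fun p => hnonneg p.1 p.2
    refine ⟨ε • y, fun i => ?_⟩
    rw [sum_abs_sub_eq_sum_add_sum_supportSign_mul (s := S i) (c := ε • y)
      (fun j => mul_nonneg hε.le (hy j)) (fun j => hεy (i, j)), hrow i]
    simp only [Pi.smul_apply, smul_eq_mul, mul_left_comm _ ε, ← Finset.mul_sum]
    linarith [mul_neg_of_pos_of_neg hε (hneg i)]
end

section
/- Let S be the 6×6 stochastic matrix S = (1/3)·[[1,0,0,1,0,1],[1,1,1,0,0,0],[0,0,1,0,1,1],[0,1,0,1,0,1],[1,0,0,1,1,0],[0,1,0,0,1,1]]. Then S is a scrambling matrix (hence its coefficient of ergodicity satisfies τ(S) < 1), but its metric consensus seminorm satisfies |S|_∞ = 1; in particular τ(S) < |S|_∞, so the metric consensus seminorm for p = ∞ is not equal to the coefficient of ergodicity. -/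
/-!
For a scrambling matrix any two rows share a column where both are positive, so the ℓ¹ distance
between two probability rows, `2 - 2 ∑ₖ min (sᵢₖ) (sⱼₖ)`, stays below `2`; hence `τ(S) < 1`.

On the other hand `|S|_∞ = min_c maxᵢ ∑ⱼ |sᵢⱼ - cⱼ|`, which is at most `‖S‖_∞ = 1` (take `c = 0`).
For the lower bound, rows `1, 2, 3, 4` (counting from `0`) of the example have supports
`{0,1,2}`, `{2,4,5}`, `{1,3,5}`, `{0,3,4}`: every column lies in exactly two of them, so whatever
`c` is, each column contributes at least `2 · |1/3 - cⱼ| + 2 · |cⱼ| ≥ 2/3` to the total distance of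
these four rows from `c`, which is therefore at least `4`, and one of the rows is at distance `≥ 1`.
-/

open Matrix Finset
open scoped ENNReal

attribute [local instance] Matrix.linftyOpNormedAddCommGroup

lemma Matrix.sum_abs_le_linfty_opNorm {n m : Type*} [Fintype n] [Fintype m]
    (M : Matrix n m ℝ) (i : n) : ∑ j, |M i j| ≤ ‖M‖ := by
  have := Finset.le_sup (f := fun i => ∑ j, ‖M i j‖₊) (Finset.mem_univ i)
  rw [Matrix.linfty_opNorm_def]
  simpa [← NNReal.coe_le_coe] using this

lemma Matrix.linfty_opNorm_le_of_sum_abs_le {n m : Type*} [Fintype n] [Fintype m]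
    (M : Matrix n m ℝ) {C : ℝ} (hC : 0 ≤ C) (h : ∀ i, ∑ j, |M i j| ≤ C) : ‖M‖ ≤ C := by
  lift C to NNReal using hC
  rw [Matrix.linfty_opNorm_def, NNReal.coe_le_coe]
  exact Finset.sup_le fun i _ => by simpa [← NNReal.coe_le_coe] using h i

lemma matPNorm_top_eq_linfty_opNorm {n m : ℕ} (M : Matrix (Fin n) (Fin m) ℝ) :
    matPNorm ⊤ M = ‖M‖ := by
  rw [Matrix.linfty_opNorm_eq_opNorm, ← ContinuousLinearMap.opNorm_comp_linearIsometryEquiv _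
    (PiLp.equivₗᵢ (𝕜 := ℝ) fun _ : Fin m => ℝ)]
  exact ContinuousLinearMap.opNorm_ext _ _ fun x => (PiLp.norm_ofLp _).symm

lemma metricSN_le_matPNorm (p : ℝ≥0∞) [Fact (1 ≤ p)] {n m : ℕ} (M : Matrix (Fin n) (Fin m) ℝ) :
    metricSN p M ≤ matPNorm p M := by
  have hbdd : BddBelow (Set.range fun c : Fin m → ℝ => matPNorm p (M - of fun _ j => c j)) :=
    ⟨0, by rintro _ ⟨c, rfl⟩; exact norm_nonneg _⟩
  calc metricSN p M ≤ matPNorm p (M - of fun _ j => (0 : Fin m → ℝ) j) := ciInf_le hbdd 0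
    _ = matPNorm p M := by rw [show (of fun _ j => (0 : Fin m → ℝ) j) = 0 from rfl, sub_zero]

lemma le_metricSN_top {n m : ℕ} {M : Matrix (Fin n) (Fin m) ℝ} {r : ℝ}
    (h : ∀ c : Fin m → ℝ, ∃ i, r ≤ ∑ j, |M i j - c j|) : r ≤ metricSN ⊤ M := by
  refine le_ciInf fun c => ?_
  obtain ⟨i, hi⟩ := h c
  rw [matPNorm_top_eq_linfty_opNorm]
  simpa using hi.trans (Matrix.sum_abs_le_linfty_opNorm (M - of fun _ j => c j) i)

lemma IsStochastic.metricSN_top_le_one {n : ℕ} {S : Matrix (Fin n) (Fin n) ℝ}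
    (hS : IsStochastic S) : metricSN ⊤ S ≤ 1 := by
  refine (metricSN_le_matPNorm ⊤ S).trans ?_
  rw [matPNorm_top_eq_linfty_opNorm]
  refine Matrix.linfty_opNorm_le_of_sum_abs_le S zero_le_one fun i => ?_
  simp_rw [abs_of_nonneg (hS.1 i _), hS.2 i, le_refl]

lemma sum_abs_sub_le_two_sub_two_mul_min {ι : Type*} [Fintype ι] {a b : ι → ℝ}
    (ha : ∀ k, 0 ≤ a k) (hb : ∀ k, 0 ≤ b k) (ha₁ : ∑ k, a k = 1) (hb₁ : ∑ k, b k = 1) (k : ι) :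
    ∑ j, |a j - b j| ≤ 2 - 2 * min (a k) (b k) := by
  have habs (j : ι) : |a j - b j| = a j + b j - 2 * min (a j) (b j) := by
    rw [abs_sub_comm, ← max_sub_min_eq_abs]
    linarith [min_add_max (a j) (b j)]
  have hmin : min (a k) (b k) ≤ ∑ j, min (a j) (b j) :=
    Finset.single_le_sum (fun j _ => le_min (ha j) (hb j)) (Finset.mem_univ k)
  simp only [habs, Finset.sum_sub_distrib, Finset.sum_add_distrib, ← Finset.mul_sum, ha₁, hb₁]
  linarith

lemma IsScrambling.coeErg_lt_one {n : ℕ} {S : Matrix (Fin n) (Fin n) ℝ} (hS : IsScrambling S) :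
    coeErg S < 1 := by
  have hpair (i j : Fin n) : ∑ k, |S i k - S j k| < 2 := by
    obtain ⟨k, hik, hjk⟩ := hS.2 i j
    have := sum_abs_sub_le_two_sub_two_mul_min (hS.1.1 i) (hS.1.1 j) (hS.1.2 i) (hS.1.2 j) k
    linarith [lt_min hik hjk]
  suffices (⨆ i, ⨆ j, ∑ k, |S i k - S j k|) < 2 by unfold coeErg; linarith
  rcases isEmpty_or_nonempty (Fin n) with _ | _
  · simp [Real.iSup_of_isEmpty]
  obtain ⟨i, hi⟩ := exists_eq_ciSup_of_finite (f := fun i => ⨆ j, ∑ k, |S i k - S j k|)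
  obtain ⟨j, hj⟩ := exists_eq_ciSup_of_finite (f := fun j => ∑ k, |S i k - S j k|)
  rw [← hi, ← hj]
  exact hpair i j

noncomputable def counterexampleMatrix : Matrix (Fin 6) (Fin 6) ℝ :=
  (1 / 3 : ℝ) •
    !![1, 0, 0, 1, 0, 1;
       1, 1, 1, 0, 0, 0;
       0, 0, 1, 0, 1, 1;
       0, 1, 0, 1, 0, 1;
       1, 0, 0, 1, 1, 0;
       0, 1, 0, 0, 1, 1]

lemma isScrambling_counterexampleMatrix : IsScrambling counterexampleMatrix := by
  refine ⟨⟨fun i j => ?_, fun i => ?_⟩, fun i j => ?_⟩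
  · fin_cases i <;> fin_cases j <;> simp [counterexampleMatrix]
  · fin_cases i <;>
      simp only [counterexampleMatrix, Matrix.smul_apply, of_apply, Matrix.cons_val, cons_val',
        cons_val_fin_one, smul_eq_mul, Fin.sum_univ_six] <;> norm_num
  · fin_cases i <;> fin_cases j <;> simp [counterexampleMatrix, Fin.exists_fin_succ]

lemma exists_one_le_sum_abs_sub_counterexampleMatrix (c : Fin 6 → ℝ) :
    ∃ i, 1 ≤ ∑ j, |counterexampleMatrix i j - c j| := by
  by_contra! h
  have row₁ := h 1
  have row₂ := h 2
  have row₃ := h 3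
  have row₄ := h 4
  simp only [counterexampleMatrix, Matrix.smul_apply, of_apply, Matrix.cons_val, cons_val',
    cons_val_fin_one, smul_eq_mul, Fin.sum_univ_six] at row₁ row₂ row₃ row₄
  norm_num at row₁ row₂ row₃ row₄
  have hcol (k : Fin 6) : 1 / 3 ≤ |1 / 3 - c k| + |c k| := by
    simpa using abs_sub_le (1 / 3 : ℝ) (c k) 0
  linarith [hcol 0, hcol 1, hcol 2, hcol 3, hcol 4, hcol 5]

/-- The specific 6×6 stochastic matrix S below is scrambling (hence its
coefficient of ergodicity satisfies τ(S) < 1), yet its metric consensus seminorm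
satisfies |S|_∞ = 1; in particular τ(S) < |S|_∞, so the metric consensus seminorm
for p = ∞ is not equal to the coefficient of ergodicity. -/
theorem counterexample_metricSN_ne_coeErg :
    let S : Matrix (Fin 6) (Fin 6) ℝ :=
      (1 / 3 : ℝ) •
        !![1, 0, 0, 1, 0, 1;
           1, 1, 1, 0, 0, 0;
           0, 0, 1, 0, 1, 1;
           0, 1, 0, 1, 0, 1;
           1, 0, 0, 1, 1, 0;
           0, 1, 0, 0, 1, 1]
    IsScrambling S ∧ coeErg S < 1 ∧ metricSN ⊤ S = 1 ∧ coeErg S < metricSN ⊤ S := by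
  intro S
  have hS : IsScrambling S := isScrambling_counterexampleMatrix
  have hτ : coeErg S < 1 := hS.coeErg_lt_one
  have hSN : metricSN ⊤ S = 1 :=
    le_antisymm hS.1.metricSN_top_le_one
      (le_metricSN_top exists_one_le_sum_abs_sub_counterexampleMatrix)
  exact ⟨hS, hτ, hSN, hSN ▸ hτ⟩
end

section
/- For any M ∈ ℝ^{n×n} whose row sums are all equal, the induced consensus seminorm for p = ∞ equals the coefficient of ergodicity: ⟨M⟩_∞ = (1/2)·max_{i,j} Σ_{k=1}^n |m_{ik} − m_{jk}|. -/
open Matrix Finset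
open scoped ENNReal

/-!
For the sup norm, the distance of `x` to the constant vectors is half the oscillation
`max x - min x`. Equal row sums make every row difference `d = M i - M j` sum to zero, so
`(M x) i - (M x) j = ∑ k, d k * (x k - c)` for every constant `c`; centring `x` at the midpoint of
its range bounds this by `∑ k, |d k|` times half the oscillation of `x`, and the sign vector of
the maximising `d` attains the bound.
-/

lemma norm_toLp_top_sub_const {m : ℕ} (x : Fin m → ℝ) (c : ℝ) :
    ‖(WithLp.equiv ⊤ (Fin m → ℝ)).symm (x - fun _ => c)‖ = ⨆ k, |x k - c| :=
  PiLp.norm_eq_ciSup _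

lemma half_sub_le_vecSN_top {m : ℕ} (x : Fin m → ℝ) (i j : Fin m) :
    (x i - x j) / 2 ≤ vecSN ⊤ x := by
  refine le_ciInf fun c => ?_
  rw [norm_toLp_top_sub_const]
  have hi := le_ciSup (f := fun k => |x k - c|) (Finite.bddAbove_range _) i
  have hj := le_ciSup (f := fun k => |x k - c|) (Finite.bddAbove_range _) j
  linarith [le_abs_self (x i - c), neg_abs_le (x j - c)]

lemma vecSN_top_eq {m : ℕ} {x : Fin m → ℝ} {i j : Fin m}
    (hi : ∀ k, x k ≤ x i) (hj : ∀ k, x j ≤ x k) :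
    vecSN ⊤ x = (x i - x j) / 2 := by
  refine le_antisymm ?_ (half_sub_le_vecSN_top x i j)
  have : Nonempty (Fin m) := ⟨i⟩
  have hmid : ‖(WithLp.equiv ⊤ (Fin m → ℝ)).symm (x - fun _ => (x i + x j) / 2)‖
      ≤ (x i - x j) / 2 := by
    rw [norm_toLp_top_sub_const]
    exact ciSup_le fun k => abs_le.2 ⟨by linarith [hj k], by linarith [hi k]⟩
  exact (ciInf_le ⟨0, by rintro _ ⟨c, rfl⟩; positivity⟩ _).trans hmid

lemma vecSN_top_of_subsingleton {m : ℕ} [Subsingleton (Fin m)] (x : Fin m → ℝ) :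
    vecSN ⊤ x = 0 := by
  rcases isEmpty_or_nonempty (Fin m) with hm | hm
  · simp only [vecSN, norm_toLp_top_sub_const, Real.iSup_of_isEmpty, ciInf_const]
  · obtain ⟨i⟩ := hm
    have hconst : ∀ k, x k = x i := fun k => congrArg x (Subsingleton.elim k i)
    simpa using vecSN_top_eq (x := x) (fun k => (hconst k).le) (fun k => (hconst k).ge)

lemma sum_mul_le_sum_abs_mul_half_sub {ι : Type*} [Fintype ι] {d x : ι → ℝ} {a b : ℝ}
    (hd : ∑ k, d k = 0) (hx : ∀ k, x k ∈ Set.Icc b a) :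
    ∑ k, d k * x k ≤ (∑ k, |d k|) * ((a - b) / 2) := by
  have hcentre : ∑ k, d k * x k = ∑ k, d k * (x k - (a + b) / 2) := by
    simp only [mul_sub, sum_sub_distrib, ← sum_mul, hd, zero_mul, sub_zero]
  rw [hcentre, sum_mul]
  refine sum_le_sum fun k _ => ?_
  have hk : |x k - (a + b) / 2| ≤ (a - b) / 2 :=
    abs_le.2 ⟨by linarith [(hx k).1], by linarith [(hx k).2]⟩
  calc d k * (x k - (a + b) / 2) ≤ |d k| * |x k - (a + b) / 2| := by
        rw [← abs_mul]; exact le_abs_self _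
    _ ≤ |d k| * ((a - b) / 2) := mul_le_mul_of_nonneg_left hk (abs_nonneg _)

lemma exists_pm_one_sum_mul_eq_sum_abs {ι : Type*} [Fintype ι] [Nontrivial ι] {d : ι → ℝ}
    (hd : ∑ k, d k = 0) :
    ∃ x : ι → ℝ, (∀ k, x k = 1 ∨ x k = -1) ∧ (∃ k, x k = 1) ∧ (∃ k, x k = -1) ∧
      ∑ k, d k * x k = ∑ k, |d k| := by
  classical
  by_cases hpos : ∃ k, 0 < d k
  · obtain ⟨kp, hkp⟩ := hpos
    obtain ⟨km, hkm⟩ : ∃ k, ¬ 0 < d k := by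
      by_contra! hall
      exact (sum_pos (fun k _ => hall k) univ_nonempty).ne' hd
    refine ⟨fun k => if 0 < d k then 1 else -1, fun k => by by_cases hk : 0 < d k <;> simp [hk],
      ⟨kp, if_pos hkp⟩, ⟨km, if_neg hkm⟩, sum_congr rfl fun k _ => ?_⟩
    dsimp only
    by_cases hk : 0 < d k
    · rw [if_pos hk, mul_one, abs_of_pos hk]
    · rw [if_neg hk, abs_of_nonpos (not_lt.1 hk)]; ring
  · push Not at hpos
    have hzero : ∀ k, d k = 0 := fun k =>
      (sum_eq_zero_iff_of_nonpos fun k _ => hpos k).1 hd k (mem_univ k)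
    obtain ⟨i, j, hij⟩ := exists_pair_ne ι
    refine ⟨fun k => if k = i then 1 else -1, fun k => by by_cases hk : k = i <;> simp [hk],
      ⟨i, if_pos rfl⟩, ⟨j, if_neg hij.symm⟩, ?_⟩
    simp [hzero]

lemma vecSN_top_eq_one_of_pm_one {m : ℕ} {x : Fin m → ℝ} (hx : ∀ k, x k = 1 ∨ x k = -1)
    {i j : Fin m} (hi : x i = 1) (hj : x j = -1) : vecSN ⊤ x = 1 := by
  have hbound : ∀ k, -1 ≤ x k ∧ x k ≤ 1 := fun k => by rcases hx k with h | h <;> simp [h]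
  rw [vecSN_top_eq (i := i) (j := j) (fun k => hi ▸ (hbound k).2) (fun k => hj ▸ (hbound k).1),
    hi, hj]
  norm_num

lemma mulVec_apply_sub_mulVec_apply {m n : ℕ} (M : Matrix (Fin m) (Fin n) ℝ) (x : Fin n → ℝ)
    (i j : Fin m) : (M *ᵥ x) i - (M *ᵥ x) j = ∑ k, (M i k - M j k) * x k := by
  simp only [mulVec, dotProduct, sub_mul, sum_sub_distrib]

lemma sum_sub_eq_zero_of_eq_rowSum {m n : ℕ} {M : Matrix (Fin m) (Fin n) ℝ}
    (h : ∀ i i', ∑ j, M i j = ∑ j, M i' j) (i j : Fin m) : ∑ k, (M i k - M j k) = 0 := by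
  rw [sum_sub_distrib, h i j, sub_self]

lemma sum_abs_sub_le_iSup_iSup {n : ℕ} (M : Matrix (Fin n) (Fin n) ℝ) (i j : Fin n) :
    ∑ k, |M i k - M j k| ≤ ⨆ i', ⨆ j', ∑ k, |M i' k - M j' k| :=
  le_ciSup_of_le (Finite.bddAbove_range _) i <| le_ciSup_of_le (Finite.bddAbove_range _) j le_rfl

lemma sum_abs_sub_le_two_mul_coeErg {n : ℕ} (M : Matrix (Fin n) (Fin n) ℝ) (i j : Fin n) :
    ∑ k, |M i k - M j k| ≤ 2 * coeErg M := by
  rw [coeErg, ← mul_assoc, show (2 : ℝ) * (1 / 2) = 1 by norm_num, one_mul]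
  exact sum_abs_sub_le_iSup_iSup M i j

lemma exists_coeErg_eq {n : ℕ} [Nonempty (Fin n)] (M : Matrix (Fin n) (Fin n) ℝ) :
    ∃ i j, coeErg M = (1 / 2) * ∑ k, |M i k - M j k| := by
  obtain ⟨⟨i, j⟩, hmax⟩ := Finite.exists_max fun p : Fin n × Fin n => ∑ k, |M p.1 k - M p.2 k|
  exact ⟨i, j, congrArg _ <| le_antisymm (ciSup_le fun i' => ciSup_le fun j' => hmax (i', j'))
    (sum_abs_sub_le_iSup_iSup M i j)⟩

lemma coeErg_of_subsingleton {n : ℕ} [Subsingleton (Fin n)] (M : Matrix (Fin n) (Fin n) ℝ) :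
    coeErg M = 0 := by
  have hzero : ∀ i j : Fin n, ∑ k, |M i k - M j k| = 0 := fun i j => by simp [Subsingleton.elim i j]
  simp [coeErg, hzero]

lemma vecSN_top_mulVec_le {n : ℕ} [Nonempty (Fin n)] {M : Matrix (Fin n) (Fin n) ℝ}
    (h : ∀ i i', ∑ j, M i j = ∑ j, M i' j) (x : Fin n → ℝ) :
    vecSN ⊤ (M *ᵥ x) ≤ coeErg M * vecSN ⊤ x := by
  obtain ⟨i, hi⟩ := Finite.exists_max (M *ᵥ x)
  obtain ⟨j, hj⟩ := Finite.exists_min (M *ᵥ x)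
  obtain ⟨a, ha⟩ := Finite.exists_max x
  obtain ⟨b, hb⟩ := Finite.exists_min x
  have hrow := sum_sub_eq_zero_of_eq_rowSum h i j
  have hle := sum_mul_le_sum_abs_mul_half_sub hrow fun k => ⟨hb k, ha k⟩
  have hx : 0 ≤ (x a - x b) / 2 := by linarith [ha b]
  rw [vecSN_top_eq hi hj, vecSN_top_eq ha hb, mulVec_apply_sub_mulVec_apply]
  calc (∑ k, (M i k - M j k) * x k) / 2
      ≤ (∑ k, |M i k - M j k|) * ((x a - x b) / 2) / 2 := by linarith
    _ ≤ 2 * coeErg M * ((x a - x b) / 2) / 2 := by gcongr; exact sum_abs_sub_le_two_mul_coeErg M i j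
    _ = coeErg M * ((x a - x b) / 2) := by ring

lemma exists_vecSN_top_eq_one_coeErg_le {n : ℕ} [Nontrivial (Fin n)]
    {M : Matrix (Fin n) (Fin n) ℝ} (h : ∀ i i', ∑ j, M i j = ∑ j, M i' j) :
    ∃ x, vecSN ⊤ x = 1 ∧ coeErg M ≤ vecSN ⊤ (M *ᵥ x) := by
  obtain ⟨i, j, hij⟩ := exists_coeErg_eq M
  have hrow := sum_sub_eq_zero_of_eq_rowSum h i j
  obtain ⟨x, hpm, ⟨k₁, hk₁⟩, ⟨k₂, hk₂⟩, hsum⟩ := exists_pm_one_sum_mul_eq_sum_abs hrow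
  refine ⟨x, vecSN_top_eq_one_of_pm_one hpm hk₁ hk₂, ?_⟩
  have := half_sub_le_vecSN_top (M *ᵥ x) i j
  rw [mulVec_apply_sub_mulVec_apply, hsum] at this
  linarith

/-- For any M ∈ ℝ^{n×n} whose row sums are all equal, the induced
consensus seminorm for p = ∞ equals the coefficient of ergodicity:
⟨M⟩_∞ = (1/2)·max_{i,j} Σ_k |m_{ik} − m_{jk}|. -/
theorem inducedSN_infty_eq_coeErg (n : ℕ) (M : Matrix (Fin n) (Fin n) ℝ)
    (h : ∀ i i', ∑ j, M i j = ∑ j, M i' j) :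
    inducedSN ⊤ M = coeErg M := by
  rcases subsingleton_or_nontrivial (Fin n) with hn | hn
  -- For `n ≤ 1` no vector has seminorm `1`, and `sSup ∅ = 0`.
  · have hempty : {r | ∃ x : Fin n → ℝ, vecSN ⊤ x = 1 ∧ r = vecSN ⊤ (M *ᵥ x)} = ∅ :=
      Set.eq_empty_of_forall_notMem fun r ⟨x, hx, _⟩ => by
        rw [vecSN_top_of_subsingleton] at hx; exact zero_ne_one hx
    rw [inducedSN, hempty, Real.sSup_empty, coeErg_of_subsingleton]
  · obtain ⟨x, hx, hle⟩ := exists_vecSN_top_eq_one_coeErg_le h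
    have hub : ∀ r ∈ {r | ∃ x : Fin n → ℝ, vecSN ⊤ x = 1 ∧ r = vecSN ⊤ (M *ᵥ x)},
        r ≤ coeErg M := by
      rintro _ ⟨y, hy, rfl⟩
      simpa [hy] using vecSN_top_mulVec_le h y
    exact le_antisymm (csSup_le ⟨_, x, hx, rfl⟩ hub) (le_csSup_of_le ⟨_, hub⟩ ⟨x, hx, rfl⟩ hle)
end

section
/- Let Q ∈ ℝ^{(n−1)×n} be a full row rank matrix with kernel equal to span{𝟏}. Then for every A ∈ ℝ^{n×n} whose row sums are all equal, there exists a unique matrix Ā ∈ ℝ^{(n−1)×(n−1)} such that QA = ĀQ. Conversely, for every Ā ∈ ℝ^{(n−1)×(n−1)} there exists a matrix A ∈ ℝ^{n×n} with equal row sums such that QA = ĀQ, and any two such matrices A₁, A₂ differ by a matrix of the form 𝟏cᵀ: A₁ = A₂ + 𝟏cᵀ for some c ∈ ℝ^n. -/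
/-!
Fix a right inverse `R` of `Q` (it exists because `Q` has full row rank). Since `ker Q = span {𝟏}`
and `Q (R Q - 1) = 0`, the matrix `R Q - 1` has the form `𝟏 cᵀ`. Any `P` with `P 𝟏 = 0`, in
particular `P = Q A` for `A` with equal row sums, therefore satisfies `P = (P R) Q`, so
`Ā = Q A R`, unique because `Q` is right-cancellable. Conversely `A = R Ā Q` works, and two
solutions differ by a matrix killed by `Q`, i.e. by some `𝟏 cᵀ`.
-/

open Matrix Finset
open scoped ENNReal

namespace Matrix

variable {K l m n : Type*} [Field K] [Fintype n]

theorem exists_mul_eq_one_of_rank_eq_card [Fintype m] [DecidableEq m] [DecidableEq n]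
    {Q : Matrix m n K} (hQ : Q.rank = Fintype.card m) : ∃ R : Matrix n m K, Q * R = 1 := by
  have hsurj : LinearMap.range Q.mulVecLin = ⊤ :=
    Submodule.eq_top_of_finrank_eq <| by
      rw [← Matrix.rank, hQ, Module.finrank_fintype_fun_eq_card]
  obtain ⟨g, hg⟩ := Q.mulVecLin.exists_rightInverse_of_surjective hsurj
  refine ⟨LinearMap.toMatrix' g, Matrix.toLin'.injective ?_⟩
  rw [Matrix.toLin'_mul, Matrix.toLin'_toMatrix', Matrix.toLin'_one]
  exact hg

theorem mulVec_one_mem_span_one_iff {A : Matrix m n K} :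
    A *ᵥ 1 ∈ Submodule.span K {1} ↔ ∀ i i', ∑ j, A i j = ∑ j, A i' j := by
  have hrow : ∀ i, (A *ᵥ 1) i = ∑ j, A i j := fun i => by simp [mulVec, dotProduct]
  rw [Submodule.mem_span_singleton]
  constructor
  · rintro ⟨t, ht⟩ i i'
    rw [← hrow, ← hrow, ← ht]
    rfl
  · intro hA
    cases isEmpty_or_nonempty m with
    | inl _ => exact ⟨0, Subsingleton.elim _ _⟩
    | inr hm =>
      obtain ⟨i₀⟩ := hm
      exact ⟨∑ j, A i₀ j, funext fun i => by simp [hrow, hA i i₀]⟩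

section KerEqSpanOne

variable {Q : Matrix m n K} (hker : LinearMap.ker Q.mulVecLin = Submodule.span K {1})
include hker

theorem mulVec_one_eq_zero_of_ker_eq_span_one : Q *ᵥ 1 = 0 :=
  (hker ▸ Submodule.mem_span_singleton_self _ : (1 : n → K) ∈ LinearMap.ker Q.mulVecLin)

theorem mul_eq_zero_iff_of_ker_eq_span_one {M : Matrix n l K} :
    Q * M = 0 ↔ ∃ c : l → K, M = replicateRow n c := by
  constructor
  · intro hM
    have hcol : ∀ j, ∃ t : K, t • 1 = Mᵀ j := fun j => by
      rw [← Submodule.mem_span_singleton, ← hker, LinearMap.mem_ker, mulVecLin_apply]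
      exact funext fun i => by simpa [mul_apply, mulVec, dotProduct] using congrFun₂ hM i j
    choose c hc using hcol
    exact ⟨c, ext fun i j => by simpa using (congrFun (hc j) i).symm⟩
  · rintro ⟨c, rfl⟩
    rw [← one_vecMulVec, mul_vecMulVec, mulVec_one_eq_zero_of_ker_eq_span_one hker,
      zero_vecMulVec]

theorem mul_mul_eq_self_of_mulVec_one_eq_zero [Fintype m] [DecidableEq m] [DecidableEq n]
    {R : Matrix n m K} (hQR : Q * R = 1) {P : Matrix l n K} (hP : P *ᵥ 1 = 0) :
    P * R * Q = P := by
  obtain ⟨c, hc⟩ := (mul_eq_zero_iff_of_ker_eq_span_one hker (M := R * Q - 1)).1 <| by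
    rw [Matrix.mul_sub, ← Matrix.mul_assoc, hQR, Matrix.one_mul, Matrix.mul_one, sub_self]
  rw [Matrix.mul_assoc, eq_add_of_sub_eq hc, Matrix.mul_add, Matrix.mul_one, ← one_vecMulVec,
    mul_vecMulVec, hP, zero_vecMulVec, zero_add]

end KerEqSpanOne

end Matrix

theorem projected_matrix_correspondence_general (n : ℕ)
    (Q : Matrix (Fin (n - 1)) (Fin n) ℝ)
    (hrank : Q.rank = n - 1)
    (hker : LinearMap.ker Q.mulVecLin
        = Submodule.span ℝ {(fun _ => (1 : ℝ) : Fin n → ℝ)}) :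
    (∀ A : Matrix (Fin n) (Fin n) ℝ, (∀ i i', ∑ j, A i j = ∑ j, A i' j) →
      ∃! Abar : Matrix (Fin (n - 1)) (Fin (n - 1)) ℝ, Q * A = Abar * Q) ∧
    (∀ Abar : Matrix (Fin (n - 1)) (Fin (n - 1)) ℝ,
      ∃ A : Matrix (Fin n) (Fin n) ℝ,
        (∀ i i', ∑ j, A i j = ∑ j, A i' j) ∧ Q * A = Abar * Q) ∧
    (∀ (Abar : Matrix (Fin (n - 1)) (Fin (n - 1)) ℝ) (A₁ A₂ : Matrix (Fin n) (Fin n) ℝ),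
      (∀ i i', ∑ j, A₁ i j = ∑ j, A₁ i' j) → (∀ i i', ∑ j, A₂ i j = ∑ j, A₂ i' j) →
      Q * A₁ = Abar * Q → Q * A₂ = Abar * Q →
      ∃ c : Fin n → ℝ, A₁ = A₂ + Matrix.of fun _ j => c j) := by
  replace hker : LinearMap.ker Q.mulVecLin = Submodule.span ℝ {1} := hker
  obtain ⟨R, hQR⟩ := exists_mul_eq_one_of_rank_eq_card (Q := Q) (by simpa using hrank)
  have cancel_Q : ∀ B₁ B₂ : Matrix (Fin (n - 1)) (Fin (n - 1)) ℝ, B₁ * Q = B₂ * Q → B₁ = B₂ :=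
    fun B₁ B₂ h => by simpa [Matrix.mul_assoc, hQR] using congrArg (· * R) h
  refine ⟨fun A hA => ?_, fun Abar => ⟨R * Abar * Q, ?_, ?_⟩, ?_⟩
  · have hQA : (Q * A) *ᵥ 1 = 0 := by
      rw [← mulVec_mulVec]
      exact LinearMap.mem_ker.1 (hker ▸ mulVec_one_mem_span_one_iff.2 hA)
    have hfactor := mul_mul_eq_self_of_mulVec_one_eq_zero hker hQR hQA
    exact ⟨Q * A * R, hfactor.symm, fun B hB => cancel_Q _ _ (by rw [hfactor, hB])⟩
  · have h0 : (R * Abar * Q) *ᵥ 1 = 0 := by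
      rw [← mulVec_mulVec, mulVec_one_eq_zero_of_ker_eq_span_one hker, mulVec_zero]
    exact mulVec_one_mem_span_one_iff.1 (h0 ▸ zero_mem _)
  · rw [← Matrix.mul_assoc, ← Matrix.mul_assoc, hQR, Matrix.one_mul]
  · intro Abar A₁ A₂ _ _ h₁ h₂
    obtain ⟨c, hc⟩ := (mul_eq_zero_iff_of_ker_eq_span_one hker (M := A₁ - A₂)).1 <| by
      rw [Matrix.mul_sub, h₁, h₂, sub_self]
    exact ⟨c, eq_add_of_sub_eq' hc⟩

/-- Let Q ∈ ℝ^{(n−1)×n} have full row rank with kernel span{𝟏}. Then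
every A ∈ ℝ^{n×n} with equal row sums admits a unique Ā ∈ ℝ^{(n−1)×(n−1)} with
QA = ĀQ; conversely every Ā admits such an A with equal row sums, and any two such
A₁, A₂ differ by a matrix of the form 𝟏cᵀ. -/
theorem projected_matrix_correspondence (n : ℕ) (hn : 0 < n)
    (Q : Matrix (Fin (n - 1)) (Fin n) ℝ)
    (hrank : Q.rank = n - 1)
    (hker : LinearMap.ker Q.mulVecLin
        = Submodule.span ℝ {(fun _ => (1 : ℝ) : Fin n → ℝ)}) :
    (∀ A : Matrix (Fin n) (Fin n) ℝ, (∀ i i', ∑ j, A i j = ∑ j, A i' j) →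
      ∃! Abar : Matrix (Fin (n - 1)) (Fin (n - 1)) ℝ, Q * A = Abar * Q) ∧
    (∀ Abar : Matrix (Fin (n - 1)) (Fin (n - 1)) ℝ,
      ∃ A : Matrix (Fin n) (Fin n) ℝ,
        (∀ i i', ∑ j, A i j = ∑ j, A i' j) ∧ Q * A = Abar * Q) ∧
    (∀ (Abar : Matrix (Fin (n - 1)) (Fin (n - 1)) ℝ) (A₁ A₂ : Matrix (Fin n) (Fin n) ℝ),
      (∀ i i', ∑ j, A₁ i j = ∑ j, A₁ i' j) → (∀ i i', ∑ j, A₂ i j = ∑ j, A₂ i' j) →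
      Q * A₁ = Abar * Q → Q * A₂ = Abar * Q →
      ∃ c : Fin n → ℝ, A₁ = A₂ + Matrix.of fun _ j => c j) :=
  projected_matrix_correspondence_general n Q hrank hker
end

section
/- Let N be a submultiplicative consensus seminorm on E^{n×n}, and let 𝒞 be a compact set of matrices in E^{n×n}, each of whose row sums all equal 1 and each satisfying N(M) < 1; set λ = max_{M ∈ 𝒞} N(M). Then for every infinite sequence M₁, M₂, … of matrices from 𝒞, the product M_i M_{i−1} ⋯ M₁ converges as i → ∞ to a rank-one matrix of the form 𝟏c for some row vector c, and convergence occurs as fast as λ^i converges to zero: there is a constant K such that ‖M_i M_{i−1} ⋯ M₁ − 𝟏c‖ ≤ K·λ^i for all i ≥ 1. -/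
/-!
In finite dimension the seminorm `N` is continuous, so `λ` is attained on `𝒞` and `λ < 1`, and
`N` controls the distance to its kernel, the consensus matrices: every `X` lies within `α N(X)` of
some `𝟏c`. Submultiplicativity gives `N(Pᵢ) ≤ N(I) λⁱ` for `Pᵢ = Mᵢ ⋯ M₁`, so `Pᵢ = 𝟏cᵢ + Rᵢ`
with `‖Rᵢ‖ = O(λⁱ)`. A matrix with unit row sums fixes every `𝟏c`, hence
`Pᵢ₊₁ - Pᵢ = (Mᵢ₊₁ - I) Rᵢ = O(λⁱ)`: the `Pᵢ` converge geometrically, and their limit, being also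
the limit of the `𝟏cᵢ`, is a consensus matrix.
-/

open Matrix Finset
open scoped ENNReal

/-- The space of matrices with equal row sums is closed under matrix products. -/
lemma EqRowSum.mul_mem {n : ℕ} {A B : Matrix (Fin n) (Fin n) ℝ}
    (hA : A ∈ EqRowSum n n) (hB : B ∈ EqRowSum n n) : A * B ∈ EqRowSum n n := by
  intro i i'
  have key : ∀ r : Fin n, ∑ j, (A * B) r j = (∑ k, A r k) * (∑ j, B r j) := by
    intro r
    calc ∑ j, (A * B) r j = ∑ j, ∑ k, A r k * B k j := by simp [Matrix.mul_apply]
    _ = ∑ k, ∑ j, A r k * B k j := Finset.sum_comm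
    _ = ∑ k, A r k * (∑ j, B k j) := by simp [Finset.mul_sum]
    _ = ∑ k, A r k * (∑ j, B r j) := Finset.sum_congr rfl fun k _ => by rw [hB k r]
    _ = (∑ k, A r k) * (∑ j, B r j) := by rw [Finset.sum_mul]
  rw [key i, key i', hA i i', hB i i']

open scoped Matrix.Norms.L2Operator

section FiniteDimensionalSeminorm

variable {E : Type*} [NormedAddCommGroup E] [NormedSpace ℝ E] [FiniteDimensional ℝ E]

theorem Seminorm.continuous_of_finiteDimensional (p : Seminorm ℝ E) : Continuous p :=
  p.convexOn.locallyLipschitz.continuous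

theorem Seminorm.exists_pos_mul_norm_le (p : Seminorm ℝ E) (hp : ∀ x, p x = 0 → x = 0) :
    ∃ ε > 0, ∀ x, ε * ‖x‖ ≤ p x := by
  cases subsingleton_or_nontrivial E with
  | inl _ => exact ⟨1, one_pos, fun x => by simp [Subsingleton.elim x 0]⟩
  | inr _ =>
    obtain ⟨x₀, hx₀, hmin⟩ := (isCompact_sphere (0 : E) 1).exists_isMinOn
      (NormedSpace.sphere_nonempty.mpr zero_le_one) p.continuous_of_finiteDimensional.continuousOn
    have hx₀ne : x₀ ≠ 0 := ne_zero_of_mem_unit_sphere ⟨x₀, hx₀⟩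
    refine ⟨p x₀, (apply_nonneg p x₀).lt_of_ne' (mt (hp x₀) hx₀ne), fun x => ?_⟩
    rcases eq_or_ne x 0 with rfl | hx
    · simp
    have hx' : 0 < ‖x‖ := norm_pos_iff.mpr hx
    have hunit : ‖x‖⁻¹ • x ∈ Metric.sphere (0 : E) 1 := by
      simp [norm_smul, hx'.ne']
    have : p x₀ ≤ p (‖x‖⁻¹ • x) := hmin hunit
    rw [map_smul_eq_mul, norm_inv, norm_norm, le_inv_mul_iff₀ hx'] at this
    linarith

theorem Seminorm.exists_norm_sub_le (p : Seminorm ℝ E) :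
    ∃ α ≥ 0, ∀ x, ∃ v, p v = 0 ∧ ‖x - v‖ ≤ α * p x := by
  let K : Submodule ℝ E :=
    { carrier := {x | p x = 0}
      add_mem' := fun {x y} hx hy =>
        le_antisymm ((map_add_le_add p x y).trans (by simp [hx.out, hy.out])) (apply_nonneg p _)
      zero_mem' := map_zero p
      smul_mem' := fun c x hx => by simp [map_smul_eq_mul, hx.out] }
  obtain ⟨W, hKW⟩ := K.exists_isCompl
  obtain ⟨ε, hε, hεW⟩ := (p.comp W.subtype).exists_pos_mul_norm_le fun w hw =>
    Subtype.ext (Submodule.disjoint_def.mp hKW.disjoint w hw w.2)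
  refine ⟨ε⁻¹, inv_nonneg.mpr hε.le, fun x => ?_⟩
  obtain ⟨v, hv, w, hw, rfl⟩ :=
    Submodule.mem_sup.mp (hKW.sup_eq_top ▸ Submodule.mem_top : x ∈ K ⊔ W)
  have hpv : p v = 0 := hv
  refine ⟨v, hpv, ?_⟩
  have hpw : p w ≤ p (v + w) := by
    simpa [hpv] using map_sub_le_add p (v + w) v
  rw [add_sub_cancel_left, le_inv_mul_iff₀ hε]
  exact (hεW ⟨w, hw⟩).trans hpw

end FiniteDimensionalSeminorm

section GeometricConvergence

variable {R : Type*} [NormedRing R]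

theorem norm_mul_sub_self_le_of_mul_eq_self {m x v : R} (hv : m * v = v) :
    ‖m * x - x‖ ≤ ‖m - 1‖ * ‖x - v‖ := by
  have : m * x - x = (m - 1) * (x - v) := by
    rw [sub_one_mul, mul_sub, hv]; abel
  exact this ▸ norm_mul_le _ _

theorem exists_norm_sub_le_geometric_of_fixed_approx [CompleteSpace R] {S : Set R}
    (hS : IsClosed S) {m x v : ℕ → R} {B a r : ℝ} (hr₀ : 0 ≤ r) (hr : r < 1)
    (hx : ∀ i, x (i + 1) = m i * x i) (hm : ∀ i, ‖m i - 1‖ ≤ B)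
    (hv : ∀ i, m i * v i = v i) (hvS : ∀ i, v i ∈ S) (hxv : ∀ i, ‖x i - v i‖ ≤ a * r ^ i) :
    ∃ L ∈ S, ∀ i, ‖x i - L‖ ≤ B * a * r ^ i / (1 - r) := by
  have hstep : ∀ i, dist (x i) (x (i + 1)) ≤ B * a * r ^ i := fun i => by
    rw [dist_comm, dist_eq_norm, hx, mul_assoc]
    exact (norm_mul_sub_self_le_of_mul_eq_self (hv i)).trans
      (mul_le_mul (hm i) (hxv i) (norm_nonneg _) ((norm_nonneg _).trans (hm 0)))
  obtain ⟨L, hL⟩ := cauchySeq_tendsto_of_complete (cauchySeq_of_le_geometric r _ hr hstep)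
  have hxv_zero : Filter.Tendsto (fun i => x i - v i) Filter.atTop (nhds 0) := by
    refine squeeze_zero_norm hxv ?_
    simpa using (tendsto_pow_atTop_nhds_zero_of_lt_one hr₀ hr).const_mul a
  have hvL : Filter.Tendsto v Filter.atTop (nhds L) := by
    simpa using hL.sub hxv_zero
  refine ⟨L, hS.mem_of_tendsto hvL (Filter.Eventually.of_forall hvS), fun i => ?_⟩
  rw [← dist_eq_norm]
  exact dist_le_of_le_geometric_of_tendsto r _ hr hstep hL i

end GeometricConvergence

theorem matPNorm_two_eq_l2_opNorm {n m : ℕ} (A : Matrix (Fin n) (Fin m) ℝ) :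
    matPNorm 2 A = ‖A‖ :=
  rfl

theorem Matrix.mul_replicateRow_of_sum_eq_one {ι κ ν α : Type*} [Fintype κ] [NonAssocSemiring α]
    {M : Matrix ι κ α} (hM : ∀ i, ∑ k, M i k = 1) (c : ν → α) :
    M * replicateRow κ c = replicateRow ι c := by
  ext i j
  simp [Matrix.mul_apply, ← Finset.sum_mul, hM i]

theorem Matrix.isClosed_range_replicateRow {ι ν α : Type*} [TopologicalSpace α] [T2Space α] :
    IsClosed (Set.range (replicateRow ι : (ν → α) → Matrix ι ν α)) := by
  cases isEmpty_or_nonempty ι with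
  | inl _ => exact Set.subsingleton_of_subsingleton.isClosed
  | inr h =>
    obtain ⟨i₀⟩ := h
    exact Function.LeftInverse.isClosed_range (f := fun A : Matrix ι ν α => A i₀)
      (fun c => rfl) (continuous_apply i₀) (by fun_prop)

theorem one_mem_eqRowSum (n : ℕ) : (1 : Matrix (Fin n) (Fin n) ℝ) ∈ EqRowSum n n := by
  intro i i'
  simp [Matrix.one_apply]

theorem prodSeq_mem_eqRowSum {n : ℕ} {M : ℕ → Matrix (Fin n) (Fin n) ℝ}
    (hM : ∀ k, M k ∈ EqRowSum n n) (i : ℕ) : prodSeq M i ∈ EqRowSum n n := by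
  induction i with
  | zero => exact one_mem_eqRowSum n
  | succ i ih => exact EqRowSum.mul_mem (hM i) ih

theorem seminorm_prodSeq_le {n : ℕ} (N : Seminorm ℝ (EqRowSum n n))
    (hsub : ∀ M₁ M₂ : EqRowSum n n,
      N ⟨(M₂ : Matrix (Fin n) (Fin n) ℝ) * (M₁ : Matrix (Fin n) (Fin n) ℝ),
          EqRowSum.mul_mem M₂.2 M₁.2⟩ ≤ N M₂ * N M₁)
    (M : ℕ → EqRowSum n n) {lam : ℝ} (hM : ∀ k, N (M k) ≤ lam) (i : ℕ) :
    N ⟨prodSeq (fun k => (M k : Matrix (Fin n) (Fin n) ℝ)) i,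
        prodSeq_mem_eqRowSum (fun k => (M k).2) i⟩ ≤ N ⟨1, one_mem_eqRowSum n⟩ * lam ^ i := by
  induction i with
  | zero => simp [prodSeq]
  | succ i ih =>
    calc _ ≤ N (M i) * N ⟨_, prodSeq_mem_eqRowSum (fun k => (M k).2) i⟩ := hsub _ (M i)
      _ ≤ lam * (N ⟨1, one_mem_eqRowSum n⟩ * lam ^ i) :=
        mul_le_mul (hM i) ih (apply_nonneg N _) ((apply_nonneg N _).trans (hM 0))
      _ = N ⟨1, one_mem_eqRowSum n⟩ * lam ^ (i + 1) := by ring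

/-- Let N be a submultiplicative consensus seminorm on E^{n×n} and 𝒞 a
compact set of matrices in E^{n×n} with all row sums equal to 1 and N(M) < 1; set
λ = max_{M ∈ 𝒞} N(M). For every infinite sequence of matrices from 𝒞, the product
M_i⋯M₁ converges to a rank-one matrix 𝟏c as fast as λ^i → 0: there is K with
‖M_i⋯M₁ − 𝟏c‖ ≤ K·λ^i for all i ≥ 1. -/
theorem consensus_seminorm_contraction_convergence (n : ℕ)
    (N : Seminorm ℝ (EqRowSum n n))
    (hcons : ∀ M : EqRowSum n n,
      N M = 0 ↔ ∃ c : Fin n → ℝ, (M : Matrix (Fin n) (Fin n) ℝ) = Matrix.of fun _ j => c j)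
    (hsub : ∀ M₁ M₂ : EqRowSum n n,
      N ⟨(M₂ : Matrix (Fin n) (Fin n) ℝ) * (M₁ : Matrix (Fin n) (Fin n) ℝ),
          EqRowSum.mul_mem M₂.2 M₁.2⟩ ≤ N M₂ * N M₁)
    (C : Set (EqRowSum n n)) (hC : IsCompact C)
    (hrow1 : ∀ M ∈ C, ∀ i, ∑ j, (M : Matrix (Fin n) (Fin n) ℝ) i j = 1)
    (hcontr : ∀ M ∈ C, N M < 1) :
    ∀ Mseq : ℕ → EqRowSum n n, (∀ i, Mseq i ∈ C) →
      ∃ c : Fin n → ℝ, ∃ K : ℝ,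
        Filter.Tendsto
          (fun i => matPNorm 2
            (prodSeq (fun k => (Mseq k : Matrix (Fin n) (Fin n) ℝ)) i
              - Matrix.of fun _ j => c j))
          Filter.atTop (nhds 0) ∧
        ∀ i : ℕ, 1 ≤ i →
          matPNorm 2
            (prodSeq (fun k => (Mseq k : Matrix (Fin n) (Fin n) ℝ)) i
              - Matrix.of fun _ j => c j)
            ≤ K * (sSup ((fun M => N M) '' C)) ^ i := by
  intro Mseq hMseq
  set lam := sSup ((fun M => N M) '' C)
  have hNc : Continuous fun M : EqRowSum n n => N M := N.continuous_of_finiteDimensional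
  have hN_le : ∀ k, N (Mseq k) ≤ lam := fun k =>
    le_csSup (hC.image hNc).bddAbove (Set.mem_image_of_mem _ (hMseq k))
  have hlam₀ : 0 ≤ lam := (apply_nonneg N _).trans (hN_le 0)
  have hlam₁ : lam < 1 :=
    (hC.sSup_lt_iff_of_continuous ⟨_, hMseq 0⟩ hNc.continuousOn 1).mpr hcontr
  obtain ⟨B, hB⟩ := isBounded_iff_forall_norm_le.mp
    (hC.image (f := fun M : EqRowSum n n => (M : Matrix (Fin n) (Fin n) ℝ) - 1)
      (by fun_prop)).isBounded
  obtain ⟨α, hα₀, hα⟩ := N.exists_norm_sub_le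
  choose v hNv hv using fun i =>
    hα ⟨_, prodSeq_mem_eqRowSum (fun k => (Mseq k).2) i⟩
  choose c hc using fun i => (hcons (v i)).mp (hNv i)
  have hxv : ∀ i, ‖prodSeq (fun k => (Mseq k : Matrix (Fin n) (Fin n) ℝ)) i
      - replicateRow (Fin n) (c i)‖ ≤ α * N ⟨1, one_mem_eqRowSum n⟩ * lam ^ i := fun i => by
    rw [mul_assoc, replicateRow, ← hc i]
    exact (hv i).trans (mul_le_mul_of_nonneg_left (seminorm_prodSeq_le N hsub Mseq hN_le i) hα₀)
  obtain ⟨_, ⟨cL, rfl⟩, hL⟩ := exists_norm_sub_le_geometric_of_fixed_approx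
    Matrix.isClosed_range_replicateRow (m := fun i => (Mseq i : Matrix (Fin n) (Fin n) ℝ))
    (v := fun i => replicateRow (Fin n) (c i)) hlam₀ hlam₁ (fun i => rfl)
    (fun i => hB _ ⟨_, hMseq i, rfl⟩)
    (fun i => Matrix.mul_replicateRow_of_sum_eq_one (hrow1 _ (hMseq i)) (c i))
    (fun i => Set.mem_range_self (c i)) hxv
  have hbound : ∀ i, matPNorm 2 (prodSeq (fun k => (Mseq k : Matrix (Fin n) (Fin n) ℝ)) i
      - Matrix.of fun _ j => cL j) ≤ B * (α * N ⟨1, one_mem_eqRowSum n⟩) / (1 - lam) * lam ^ i :=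
    fun i => by
      rw [matPNorm_two_eq_l2_opNorm]
      exact (hL i).trans_eq (by ring)
  refine ⟨cL, _, squeeze_zero (fun i => norm_nonneg _) hbound ?_, fun i _ => hbound i⟩
  simpa using (tendsto_pow_atTop_nhds_zero_of_lt_one hlam₀ hlam₁).const_mul
    (B * (α * N ⟨1, one_mem_eqRowSum n⟩) / (1 - lam))
end

section
/- Let N be an arbitrary submultiplicative consensus seminorm on E^{n×n}. If there exists a stochastic matrix S₁ that is not scrambling and satisfies N(S₁) < 1, then there exists a scrambling matrix S₂ with N(S₂) > 1. Consequently, there is no class of stochastic matrices strictly larger than the class of scrambling matrices on which a single submultiplicative consensus seminorm is everywhere less than 1. -/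
open Matrix Finset
open scoped ENNReal

/-- Stochastic matrices have all row sums equal (to 1). -/
lemma IsStochastic.mem_eqRowSum {n : ℕ} {S : Matrix (Fin n) (Fin n) ℝ}
    (hS : IsStochastic S) : S ∈ EqRowSum n n := by
  intro i i'
  rw [hS.2 i, hS.2 i']

/-- Product of stochastic matrices is stochastic. -/
lemma IsStochastic.mul' {n : ℕ} {A B : Matrix (Fin n) (Fin n) ℝ}
    (hA : IsStochastic A) (hB : IsStochastic B) : IsStochastic (A * B) := by
  constructor
  · intro i j
    rw [Matrix.mul_apply]
    exact Finset.sum_nonneg fun k _ => mul_nonneg (hA.1 i k) (hB.1 k j)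
  · intro i
    simp only [Matrix.mul_apply]
    rw [Finset.sum_comm]
    simp only [← Finset.mul_sum, hB.2]
    simpa using hA.2 i

/-- A stochastic matrix has a positive entry in every row. -/
lemma IsStochastic.exists_pos {n : ℕ} {S : Matrix (Fin n) (Fin n) ℝ}
    (hS : IsStochastic S) (i : Fin n) : ∃ k, 0 < S i k := by
  by_contra h
  push_neg at h
  have h0 : ∑ j, S i j = 0 :=
    Finset.sum_eq_zero fun j _ => le_antisymm (h j) (hS.1 i j)
  rw [hS.2 i] at h0
  norm_num at h0

/-- Let N be a submultiplicative consensus seminorm on E^{n×n}. If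
there is a stochastic non-scrambling matrix S₁ with N(S₁) < 1, then there exists a
scrambling matrix S₂ with N(S₂) > 1. -/
theorem no_consensus_seminorm_beyond_scrambling (n : ℕ)
    (N : Seminorm ℝ (EqRowSum n n))
    (hcons : ∀ M : EqRowSum n n,
      N M = 0 ↔ ∃ c : Fin n → ℝ, (M : Matrix (Fin n) (Fin n) ℝ) = Matrix.of fun _ j => c j)
    (hsub : ∀ (M₁ M₂ : EqRowSum n n)
        (hmem : (M₂ : Matrix (Fin n) (Fin n) ℝ) * (M₁ : Matrix (Fin n) (Fin n) ℝ)
          ∈ EqRowSum n n),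
      N ⟨(M₂ : Matrix (Fin n) (Fin n) ℝ) * (M₁ : Matrix (Fin n) (Fin n) ℝ), hmem⟩
        ≤ N M₂ * N M₁)
    (S₁ : Matrix (Fin n) (Fin n) ℝ) (hS₁ : IsStochastic S₁)
    (hscr : ¬ IsScrambling S₁)
    (hN₁ : N ⟨S₁, hS₁.mem_eqRowSum⟩ < 1) :
    ∃ S₂ : Matrix (Fin n) (Fin n) ℝ, ∃ hS₂ : IsScrambling S₂,
      1 < N ⟨S₂, hS₂.1.mem_eqRowSum⟩ := by
  by_contra hcon
  push_neg at hcon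
  -- obtain two rows with disjoint supports
  have hnand : ¬ ∀ i j, ∃ k, 0 < S₁ i k ∧ 0 < S₁ j k := fun h => hscr ⟨hS₁, h⟩
  push_neg at hnand
  obtain ⟨a, b, hab⟩ := hnand
  have hab' : a ≠ b := by
    rintro rfl
    obtain ⟨k, hk⟩ := hS₁.exists_pos a
    exact (hab k hk).not_gt hk
  have hd : ∀ k, 0 < S₁ a k → S₁ b k = 0 :=
    fun k hk => le_antisymm (hab k hk) (hS₁.1 b k)
  have hn : 0 < n := a.pos
  -- the selection matrix T and the constant matrix K
  set T : Matrix (Fin n) (Fin n) ℝ :=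
    Matrix.of fun k l => if 0 < S₁ a k then (if l = a then 1 else 0)
      else (if l = b then 1 else 0) with hTdef
  set K : Matrix (Fin n) (Fin n) ℝ := Matrix.of fun _ _ => (1 : ℝ) / n with hKdef
  have hT : IsStochastic T := by
    constructor
    · intro i j; simp only [hTdef, Matrix.of_apply]; split_ifs <;> norm_num
    · intro i
      simp only [hTdef, Matrix.of_apply]
      by_cases hi : 0 < S₁ a i <;> simp [hi]
  have hK : IsStochastic K := by
    constructor
    · intro i j; simp only [hKdef, Matrix.of_apply]; positivity
    · intro i
      simp only [hKdef, Matrix.of_apply, Finset.sum_const, Finset.card_univ,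
        Fintype.card_fin, nsmul_eq_mul]
      field_simp
  set C : Matrix (Fin n) (Fin n) ℝ := S₁ * T with hCdef
  have hC : IsStochastic C := hS₁.mul' hT
  -- rows a and b of C
  have hCa : ∀ l, C a l = if l = a then 1 else 0 := by
    intro l
    have : ∀ k, S₁ a k * T k l = S₁ a k * (if l = a then 1 else 0) := by
      intro k
      by_cases hk : 0 < S₁ a k
      · simp [hTdef, hk]
      · have h0 : S₁ a k = 0 := le_antisymm (not_lt.mp hk) (hS₁.1 a k)
        simp [h0]
    rw [hCdef, Matrix.mul_apply, Finset.sum_congr rfl fun k _ => this k,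
      ← Finset.sum_mul, hS₁.2 a, one_mul]
  have hCb : ∀ l, C b l = if l = b then 1 else 0 := by
    intro l
    have : ∀ k, S₁ b k * T k l = S₁ b k * (if l = b then 1 else 0) := by
      intro k
      by_cases hk : 0 < S₁ a k
      · simp [hTdef, hk, hd k hk]
      · simp [hTdef, hk]
    rw [hCdef, Matrix.mul_apply, Finset.sum_congr rfl fun k _ => this k,
      ← Finset.sum_mul, hS₁.2 b, one_mul]
  -- the matrix R with rows e_a (for i ≠ b) and e_b (for i = b); R * C = R
  set R : Matrix (Fin n) (Fin n) ℝ :=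
    Matrix.of fun i l => if i = b then (if l = b then (1:ℝ) else 0)
      else (if l = a then 1 else 0) with hRdef
  have hR : IsStochastic R := by
    constructor
    · intro i j; simp only [hRdef, Matrix.of_apply]; split_ifs <;> norm_num
    · intro i
      simp only [hRdef, Matrix.of_apply]
      by_cases hi : i = b <;> simp [hi]
  have hRC : R * C = R := by
    ext i l
    rw [Matrix.mul_apply]
    by_cases hi : i = b
    · have h1 : ∀ k, R i k * C k l = if k = b then C b l else 0 := by
        intro k
        by_cases hk : k = b <;> simp [hRdef, hi, hk]
      rw [Finset.sum_congr rfl fun k _ => h1 k,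
        Finset.sum_ite_eq' Finset.univ b fun _ => C b l]
      simp [hRdef, hi, hCb l]
    · have h1 : ∀ k, R i k * C k l = if k = a then C a l else 0 := by
        intro k
        by_cases hk : k = a <;> simp [hRdef, hk, hi]
      rw [Finset.sum_congr rfl fun k _ => h1 k,
        Finset.sum_ite_eq' Finset.univ a fun _ => C a l]
      simp [hRdef, hi, hCa l]
  -- N R > 0 since R is not a consensus matrix
  have hNR : 0 < N ⟨R, hR.mem_eqRowSum⟩ := by
    rcases (apply_nonneg N _).lt_or_eq with h | h
    · exact h
    obtain ⟨c, hc⟩ := (hcons _).mp h.symm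
    have h1 : R a a = c a := by simpa using congrFun (congrFun hc a) a
    have h2 : R b a = c a := by simpa using congrFun (congrFun hc b) a
    have hRaa : R a a = 1 := by simp [hRdef, hab']
    have hRba : R b a = 0 := by simp [hRdef, hab']
    rw [hRaa] at h1
    rw [hRba, ← h1] at h2
    norm_num at h2
  -- the constant B and the small ε
  have hmemTK : S₁ * T - S₁ * K ∈ EqRowSum n n :=
    Submodule.sub_mem _ (hS₁.mul' hT).mem_eqRowSum (hS₁.mul' hK).mem_eqRowSum
  set B : ℝ := N ⟨S₁ * T - S₁ * K, hmemTK⟩ with hBdef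
  have hB0 : 0 ≤ B := apply_nonneg N _
  set ε : ℝ := min 1 ((1 - N ⟨S₁, hS₁.mem_eqRowSum⟩) / (2 * (B + 1))) with hεdef
  have hε0 : 0 < ε := by
    apply lt_min one_pos
    apply div_pos (by linarith) (by linarith)
  have hε1 : ε ≤ 1 := min_le_left _ _
  -- the scrambling perturbation Tε
  set Tε : Matrix (Fin n) (Fin n) ℝ := (1 - ε) • T + ε • K with hTεdef
  have hTεpos : ∀ i j, 0 < Tε i j := by
    intro i j
    simp only [hTεdef, Matrix.add_apply, Matrix.smul_apply, smul_eq_mul]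
    have h1 : 0 ≤ (1 - ε) * T i j := mul_nonneg (by linarith) (hT.1 i j)
    have h2 : 0 < ε * K i j := by
      apply mul_pos hε0
      simp only [hKdef, Matrix.of_apply]
      positivity
    linarith
  have hTε : IsStochastic Tε := by
    constructor
    · intro i j; exact (hTεpos i j).le
    · intro i
      simp only [hTεdef, Matrix.add_apply, Matrix.smul_apply, smul_eq_mul,
        Finset.sum_add_distrib, ← Finset.mul_sum, hT.2 i, hK.2 i]
      ring
  have hTεscr : IsScrambling Tε := ⟨hTε, fun i j => ⟨a, hTεpos i a, hTεpos j a⟩⟩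
  -- bound N C < 1
  have hNTε : N ⟨Tε, hTε.mem_eqRowSum⟩ ≤ 1 := hcon Tε hTεscr
  have hprod : N ⟨S₁ * Tε, (hS₁.mul' hTε).mem_eqRowSum⟩ ≤ N ⟨S₁, hS₁.mem_eqRowSum⟩ := by
    calc N ⟨S₁ * Tε, (hS₁.mul' hTε).mem_eqRowSum⟩
        ≤ N ⟨S₁, hS₁.mem_eqRowSum⟩ * N ⟨Tε, hTε.mem_eqRowSum⟩ :=
          hsub ⟨Tε, hTε.mem_eqRowSum⟩ ⟨S₁, hS₁.mem_eqRowSum⟩ _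
      _ ≤ N ⟨S₁, hS₁.mem_eqRowSum⟩ * 1 :=
          mul_le_mul_of_nonneg_left hNTε (apply_nonneg N _)
      _ = N ⟨S₁, hS₁.mem_eqRowSum⟩ := mul_one _
  have hdec : (⟨C, hC.mem_eqRowSum⟩ : EqRowSum n n)
      = ⟨S₁ * Tε, (hS₁.mul' hTε).mem_eqRowSum⟩ + ε • ⟨S₁ * T - S₁ * K, hmemTK⟩ := by
    apply Subtype.ext
    show C = S₁ * Tε + ε • (S₁ * T - S₁ * K)
    rw [hCdef, hTεdef]
    simp only [Matrix.mul_add, Matrix.mul_smul]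
    module
  have hNC : N ⟨C, hC.mem_eqRowSum⟩ < 1 := by
    have h1 : N ⟨C, hC.mem_eqRowSum⟩
        ≤ N ⟨S₁ * Tε, (hS₁.mul' hTε).mem_eqRowSum⟩ + ε * B := by
      rw [hdec]
      calc N (⟨S₁ * Tε, (hS₁.mul' hTε).mem_eqRowSum⟩ + ε • ⟨S₁ * T - S₁ * K, hmemTK⟩)
          ≤ N ⟨S₁ * Tε, (hS₁.mul' hTε).mem_eqRowSum⟩
            + N (ε • (⟨S₁ * T - S₁ * K, hmemTK⟩ : EqRowSum n n)) := map_add_le_add N _ _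
        _ = N ⟨S₁ * Tε, (hS₁.mul' hTε).mem_eqRowSum⟩ + ε * B := by
            rw [map_smul_eq_mul, Real.norm_of_nonneg hε0.le]
    have hεb : ε ≤ (1 - N ⟨S₁, hS₁.mem_eqRowSum⟩) / (2 * (B + 1)) := min_le_right _ _
    have hεB : ε * B < 1 - N ⟨S₁, hS₁.mem_eqRowSum⟩ := by
      have hpos : 0 < 2 * (B + 1) := by linarith
      have h2 : ε * (2 * (B + 1)) ≤ 1 - N ⟨S₁, hS₁.mem_eqRowSum⟩ :=
        (le_div_iff₀ hpos).mp hεb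
      nlinarith
    linarith
  -- submultiplicativity on R * C = R gives a contradiction
  have hfinal : N ⟨R, hR.mem_eqRowSum⟩
      ≤ N ⟨R, hR.mem_eqRowSum⟩ * N ⟨C, hC.mem_eqRowSum⟩ := by
    have h := hsub ⟨C, hC.mem_eqRowSum⟩ ⟨R, hR.mem_eqRowSum⟩ (hR.mul' hC).mem_eqRowSum
    have he : (⟨R * C, (hR.mul' hC).mem_eqRowSum⟩ : EqRowSum n n)
        = ⟨R, hR.mem_eqRowSum⟩ := Subtype.ext hRC
    rwa [he] at h
  nlinarith
end
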